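/- arXiv:1604.02015 — 10 statements merged into one kernel-verified Lean document; each statement's English description precedes it below -/
import Mathlib

section
/- Let F : L → H be a groupoid fibration between topological groupoids and let G be its fibre. Then G is itself a topological groupoid with the structure maps restricted from L: for every g ∈ G¹ one has F⁰(r(g)) = F⁰(s(g)) and i(g) ∈ G¹; for every (g₁,g₂) ∈ G¹ × G¹ with s(g₁) = r(g₂) one has m(g₁,g₂) ∈ G¹; and the restriction of the source map s : G¹ → G⁰ = L⁰ (hence also the restriction of the range map r : G¹ → G⁰) is an open surjection. -/
/-- A topological groupoid: object space, arrow space, continuous open range and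
source maps, continuous unit, inversion and (partially defined, here totalized)
multiplication maps, satisfying the usual algebraic laws on composable arrows. -/
structure TopGroupoid where
  Obj : Type
  Arr : Type
  [topObj : TopologicalSpace Obj]
  [topArr : TopologicalSpace Arr]
  r : Arr → Obj
  s : Arr → Obj
  u : Obj → Arr
  i : Arr → Arr
  m : Arr → Arr → Arr
  cont_r : Continuous r
  cont_s : Continuous s
  open_r : IsOpenMap r
  open_s : IsOpenMap s
  cont_u : Continuous u
  cont_i : Continuous i
  cont_m : Continuous (fun p : {p : Arr × Arr // s p.1 = r p.2} => m p.1.1 p.1.2)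
  r_u : ∀ x, r (u x) = x
  s_u : ∀ x, s (u x) = x
  r_m : ∀ g₁ g₂, s g₁ = r g₂ → r (m g₁ g₂) = r g₁
  s_m : ∀ g₁ g₂, s g₁ = r g₂ → s (m g₁ g₂) = s g₂
  m_assoc : ∀ g₁ g₂ g₃, s g₁ = r g₂ → s g₂ = r g₃ → m (m g₁ g₂) g₃ = m g₁ (m g₂ g₃)
  u_m : ∀ g, m (u (r g)) g = g
  m_u : ∀ g, m g (u (s g)) = g
  r_i : ∀ g, r (i g) = s g
  s_i : ∀ g, s (i g) = r g
  m_i : ∀ g, m g (i g) = u (r g)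
  i_m : ∀ g, m (i g) g = u (s g)

attribute [instance] TopGroupoid.topObj TopGroupoid.topArr

/-- A continuous functor between topological groupoids. -/
structure ContFunctor (L H : TopGroupoid) where
  obj : L.Obj → H.Obj
  arr : L.Arr → H.Arr
  cont_obj : Continuous obj
  cont_arr : Continuous arr
  r_arr : ∀ l, H.r (arr l) = obj (L.r l)
  s_arr : ∀ l, H.s (arr l) = obj (L.s l)
  u_arr : ∀ x, arr (L.u x) = H.u (obj x)
  i_arr : ∀ l, arr (L.i l) = H.i (arr l)
  m_arr : ∀ l₁ l₂, L.s l₁ = L.r l₂ → arr (L.m l₁ l₂) = H.m (arr l₁) (arr l₂)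

/-- The fibre product `H¹ ×_{s,H⁰,F⁰} L⁰` (with the subspace topology). -/
abbrev FibTarget {L H : TopGroupoid} (F : ContFunctor L H) : Type :=
  {p : H.Arr × L.Obj // H.s p.1 = F.obj p.2}

/-- The map `(F¹, s) : L¹ → H¹ ×_{s,H⁰,F⁰} L⁰`. -/
def fibMap {L H : TopGroupoid} (F : ContFunctor L H) (l : L.Arr) : FibTarget F :=
  ⟨(F.arr l, L.s l), F.s_arr l⟩

/-- A groupoid fibration: a continuous functor for which `(F¹, s)` is an open surjection. -/
def IsFibration {L H : TopGroupoid} (F : ContFunctor L H) : Prop :=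
  Function.Surjective (fibMap F) ∧ IsOpenMap (fibMap F)

/-- A groupoid covering: a continuous functor for which `(F¹, s)` is a homeomorphism. -/
def IsCovering {L H : TopGroupoid} (F : ContFunctor L H) : Prop :=
  IsHomeomorph (fibMap F)

/-- The arrow set of the fibre of `F`: arrows `g` of `L` with `F¹ g = u (F⁰ (s g))`. -/
def fibreArr {L H : TopGroupoid} (F : ContFunctor L H) : Set L.Arr :=
  {g | F.arr g = H.u (F.obj (L.s g))}


/-- Inversion fixes units. -/
theorem TopGroupoid.i_u (G : TopGroupoid) (x : G.Obj) : G.i (G.u x) = G.u x := by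
  have h1 := G.m_i (G.u x)
  have h2 := G.u_m (G.i (G.u x))
  rw [G.r_i, G.s_u] at h2
  rw [G.r_u] at h1
  rw [← h2, h1]

/-- Inversion is involutive. -/
theorem TopGroupoid.i_i (G : TopGroupoid) (g : G.Arr) : G.i (G.i g) = g := by
  have h := G.u_m (G.i (G.i g))
  rw [G.r_i, G.s_i, ← G.m_i g,
    G.m_assoc g (G.i g) (G.i (G.i g)) (G.r_i g).symm (G.r_i (G.i g)).symm,
    G.m_i (G.i g), G.r_i, G.m_u] at h
  exact h.symm

/-- The continuous section `x ↦ (u (F⁰ x), x)` of the fibre product. -/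
def fibSection {L H : TopGroupoid} (F : ContFunctor L H) (x : L.Obj) : FibTarget F :=
  ⟨(H.u (F.obj x), x), H.s_u _⟩

theorem cont_fibSection {L H : TopGroupoid} (F : ContFunctor L H) :
    Continuous (fibSection F) :=
  Continuous.subtype_mk ((H.cont_u.comp F.cont_obj).prodMk continuous_id) _

/-- Key openness lemma: for `W` open in `L¹`, the set `s (W ∩ G¹)` is open. -/
theorem s_image_inter_fibre_open {L H : TopGroupoid} (F : ContFunctor L H)
    (hF : IsFibration F) (W : Set L.Arr) (hW : IsOpen W) :
    IsOpen (L.s '' (W ∩ fibreArr F)) := by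
  have heq : L.s '' (W ∩ fibreArr F) = fibSection F ⁻¹' (fibMap F '' W) := by
    ext x
    constructor
    · rintro ⟨g, ⟨hgW, hg⟩, rfl⟩
      exact ⟨g, hgW, Subtype.ext (by simp only [fibMap, fibSection]; rw [hg])⟩
    · rintro ⟨g, hgW, hg⟩
      have h := congrArg Subtype.val hg
      have h1 : F.arr g = H.u (F.obj x) := congrArg Prod.fst h
      have h2 : L.s g = x := congrArg Prod.snd h
      refine ⟨g, ⟨hgW, ?_⟩, h2⟩
      show F.arr g = H.u (F.obj (L.s g))
      rw [h2, h1]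
  rw [heq]
  exact (hF.2 W hW).preimage (cont_fibSection F)

/-- the fibre of a groupoid fibration is a topological groupoid with the
structure maps restricted from `L`: it is closed under inversion and multiplication,
`F⁰ ∘ r = F⁰ ∘ s` on it, and the restricted source and range maps `G¹ → G⁰ = L⁰`
are open surjections. -/
theorem fibre_is_topological_groupoid (L H : TopGroupoid) (F : ContFunctor L H)
    (hF : IsFibration F) :
    (∀ g ∈ fibreArr F, F.obj (L.r g) = F.obj (L.s g)) ∧
    (∀ g ∈ fibreArr F, L.i g ∈ fibreArr F) ∧
    (∀ g₁ g₂, g₁ ∈ fibreArr F → g₂ ∈ fibreArr F → L.s g₁ = L.r g₂ →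
      L.m g₁ g₂ ∈ fibreArr F) ∧
    Function.Surjective (fun g : fibreArr F => L.s g.1) ∧
    IsOpenMap (fun g : fibreArr F => L.s g.1) ∧
    Function.Surjective (fun g : fibreArr F => L.r g.1) ∧
    IsOpenMap (fun g : fibreArr F => L.r g.1) := by
  have hr : ∀ g ∈ fibreArr F, F.obj (L.r g) = F.obj (L.s g) := by
    intro g hg
    have h := congrArg H.r hg
    rwa [F.r_arr, H.r_u] at h
  have hi : ∀ g ∈ fibreArr F, L.i g ∈ fibreArr F := by
    intro g hg
    show F.arr (L.i g) = H.u (F.obj (L.s (L.i g)))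
    rw [F.i_arr, hg, H.i_u, L.s_i, hr g hg]
  have hm : ∀ g₁ g₂, g₁ ∈ fibreArr F → g₂ ∈ fibreArr F → L.s g₁ = L.r g₂ →
      L.m g₁ g₂ ∈ fibreArr F := by
    intro g₁ g₂ h1 h2 hc
    show F.arr (L.m g₁ g₂) = H.u (F.obj (L.s (L.m g₁ g₂)))
    rw [F.m_arr g₁ g₂ hc, h1, h2, L.s_m g₁ g₂ hc]
    have hb : F.obj (L.s g₁) = F.obj (L.s g₂) := by
      rw [hc, ← F.r_arr, h2, H.r_u]
    rw [hb]
    have h := H.u_m (H.u (F.obj (L.s g₂)))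
    rwa [H.r_u] at h
  have hus : ∀ x : L.Obj, (⟨L.u x, by
      show F.arr (L.u x) = H.u (F.obj (L.s (L.u x)))
      rw [F.u_arr, L.s_u]⟩ : fibreArr F) ∈ Set.univ := fun _ => trivial
  have hsurj_s : Function.Surjective (fun g : fibreArr F => L.s g.1) := by
    intro x
    refine ⟨⟨L.u x, ?_⟩, L.s_u x⟩
    show F.arr (L.u x) = H.u (F.obj (L.s (L.u x)))
    rw [F.u_arr, L.s_u]
  have hsurj_r : Function.Surjective (fun g : fibreArr F => L.r g.1) := by
    intro x
    refine ⟨⟨L.u x, ?_⟩, L.r_u x⟩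
    show F.arr (L.u x) = H.u (F.obj (L.s (L.u x)))
    rw [F.u_arr, L.s_u]
  have himg : ∀ (f : L.Arr → L.Obj) (V : Set (fibreArr F)) (W : Set L.Arr),
      Subtype.val ⁻¹' W = V →
      (fun g : fibreArr F => f g.1) '' V = f '' (W ∩ fibreArr F) := by
    intro f V W hWV
    rw [← hWV, show (fun g : fibreArr F => f g.1) = f ∘ Subtype.val from rfl,
      Set.image_comp, Subtype.image_preimage_coe, Set.inter_comm]
  have hopen_s : IsOpenMap (fun g : fibreArr F => L.s g.1) := by
    intro V hV
    rw [isOpen_induced_iff] at hV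
    obtain ⟨W, hW, hWV⟩ := hV
    rw [himg L.s V W hWV]
    exact s_image_inter_fibre_open F hF W hW
  have hopen_r : IsOpenMap (fun g : fibreArr F => L.r g.1) := by
    intro V hV
    rw [isOpen_induced_iff] at hV
    obtain ⟨W, hW, hWV⟩ := hV
    rw [himg L.r V W hWV]
    have hiW : IsOpen (L.i '' W) := by
      have : L.i '' W = L.i ⁻¹' W := by
        ext g
        constructor
        · rintro ⟨g', hg', rfl⟩
          simpa [L.i_i] using hg'
        · intro hg
          exact ⟨L.i g, hg, L.i_i g⟩
      rw [this]
      exact hW.preimage L.cont_i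
    have heq : L.r '' (W ∩ fibreArr F) = L.s '' (L.i '' W ∩ fibreArr F) := by
      ext x
      constructor
      · rintro ⟨g, ⟨hgW, hgG⟩, rfl⟩
        exact ⟨L.i g, ⟨⟨g, hgW, rfl⟩, hi g hgG⟩, L.s_i g⟩
      · rintro ⟨h, ⟨⟨g, hgW, rfl⟩, hG⟩, rfl⟩
        have hgG : g ∈ fibreArr F := by
          have := hi (L.i g) hG
          rwa [L.i_i] at this
        exact ⟨g, ⟨hgW, hgG⟩, (L.s_i g).symm⟩
    rw [heq]
    exact s_image_inter_fibre_open F hF (L.i '' W) hiW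
  exact ⟨hr, hi, hm, hsurj_s, hopen_s, hsurj_r, hopen_r⟩
end

section
/- Let F : L → H be a groupoid fibration with fibre G. Then the map from G¹ ×_{s,L⁰,r} L¹ := {(g,l) ∈ G¹ × L¹ : s(g) = r(l)} to {(l₁,l₂) ∈ L¹ × L¹ : F¹(l₁) = F¹(l₂) and s(l₁) = s(l₂)} given by (g,l) ↦ (m(g,l), l) is well defined and is a homeomorphism (both sides carrying the subspace topologies of the products), with inverse (l₁,l₂) ↦ (m(l₁, i(l₂)), l₂). Together with the assumption that (F¹,s) is an open surjection, this says that the left multiplication action of G on L¹ with bundle projection (F¹,s) is a principal G-bundle. -/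
/-- for a groupoid fibration `F : L → H` with fibre `G`, the map
`(g, l) ↦ (m(g,l), l)` is a well-defined homeomorphism from
`G¹ ×_{s,L⁰,r} L¹` onto `{(l₁,l₂) : F¹ l₁ = F¹ l₂ and s l₁ = s l₂}`, with inverse
`(l₁,l₂) ↦ (m(l₁, i l₂), l₂)`; together with the open surjectivity of `(F¹,s)` this
says that left multiplication of `G` on `L¹` is a principal `G`-bundle. -/
theorem principal_bundle_of_fibration (L H : TopGroupoid) (F : ContFunctor L H)
    (hF : IsFibration F) :
    ∃ Φ : {p : L.Arr × L.Arr // p.1 ∈ fibreArr F ∧ L.s p.1 = L.r p.2} →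
          {p : L.Arr × L.Arr // F.arr p.1 = F.arr p.2 ∧ L.s p.1 = L.s p.2},
      (∀ d, (Φ d : L.Arr × L.Arr) = (L.m d.1.1 d.1.2, d.1.2)) ∧
      IsHomeomorph Φ ∧
      (∀ t, ∃ d, Φ d = t ∧ (d : L.Arr × L.Arr) = (L.m t.1.1 (L.i t.1.2), t.1.2)) := by

  classical
  -- well-definedness of Φ
  have hΦwd : ∀ d : {p : L.Arr × L.Arr // p.1 ∈ fibreArr F ∧ L.s p.1 = L.r p.2},
      F.arr (L.m d.1.1 d.1.2) = F.arr d.1.2 ∧ L.s (L.m d.1.1 d.1.2) = L.s d.1.2 := by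
    rintro ⟨⟨g, l⟩, hg, hsr⟩
    constructor
    · have h1 : F.arr (L.m g l) = H.m (F.arr g) (F.arr l) := F.m_arr g l hsr
      have h2 : F.arr g = H.u (H.r (F.arr l)) := by
        rw [hg, hsr, ← F.r_arr]
      rw [h1, h2, H.u_m]
    · exact L.s_m g l hsr
  -- well-definedness of Ψ
  have hΨwd : ∀ t : {p : L.Arr × L.Arr // F.arr p.1 = F.arr p.2 ∧ L.s p.1 = L.s p.2},
      L.m t.1.1 (L.i t.1.2) ∈ fibreArr F ∧ L.s (L.m t.1.1 (L.i t.1.2)) = L.r t.1.2 := by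
    rintro ⟨⟨l₁, l₂⟩, hFeq, hseq⟩
    have hcomp : L.s l₁ = L.r (L.i l₂) := by rw [L.r_i]; exact hseq
    have hs : L.s (L.m l₁ (L.i l₂)) = L.r l₂ := by rw [L.s_m _ _ hcomp, L.s_i]
    refine ⟨?_, hs⟩
    show F.arr (L.m l₁ (L.i l₂)) = H.u (F.obj (L.s (L.m l₁ (L.i l₂))))
    rw [F.m_arr _ _ hcomp, F.i_arr, hFeq, H.m_i, hs, ← F.r_arr]
  set Φ : {p : L.Arr × L.Arr // p.1 ∈ fibreArr F ∧ L.s p.1 = L.r p.2} →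
      {p : L.Arr × L.Arr // F.arr p.1 = F.arr p.2 ∧ L.s p.1 = L.s p.2} :=
    fun d => ⟨(L.m d.1.1 d.1.2, d.1.2), hΦwd d⟩ with hΦdef
  set Ψ : {p : L.Arr × L.Arr // F.arr p.1 = F.arr p.2 ∧ L.s p.1 = L.s p.2} →
      {p : L.Arr × L.Arr // p.1 ∈ fibreArr F ∧ L.s p.1 = L.r p.2} :=
    fun t => ⟨(L.m t.1.1 (L.i t.1.2), t.1.2), hΨwd t⟩ with hΨdef
  have hleft : Function.LeftInverse Ψ Φ := by
    rintro ⟨⟨g, l⟩, hg, hsr⟩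
    apply Subtype.ext
    simp only [hΦdef, hΨdef]
    have : L.m (L.m g l) (L.i l) = g := by
      rw [L.m_assoc g l (L.i l) hsr (by rw [L.r_i]), L.m_i, ← hsr, L.m_u]
    simp [this]
  have hright : Function.RightInverse Ψ Φ := by
    rintro ⟨⟨l₁, l₂⟩, hFeq, hseq⟩
    apply Subtype.ext
    simp only [hΦdef, hΨdef]
    have hcomp : L.s l₁ = L.r (L.i l₂) := by rw [L.r_i]; exact hseq
    have : L.m (L.m l₁ (L.i l₂)) l₂ = l₁ := by
      rw [L.m_assoc l₁ (L.i l₂) l₂ hcomp (L.s_i l₂), L.i_m, ← hseq, L.m_u]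
    simp [this]
  have hcontΦ : Continuous Φ := by
    apply Continuous.subtype_mk
    refine Continuous.prodMk ?_ ?_
    · exact L.cont_m.comp (Continuous.subtype_mk
        (continuous_subtype_val) (fun d => d.2.2))
    · exact continuous_snd.comp continuous_subtype_val
  have hcontΨ : Continuous Ψ := by
    apply Continuous.subtype_mk
    refine Continuous.prodMk ?_ ?_
    · exact L.cont_m.comp (Continuous.subtype_mk
        ((continuous_fst.comp continuous_subtype_val).prodMk
          (L.cont_i.comp (continuous_snd.comp continuous_subtype_val)))
        (fun t => by show L.s t.1.1 = L.r (L.i t.1.2); rw [L.r_i]; exact t.2.2))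
    · exact continuous_snd.comp continuous_subtype_val
  refine ⟨Φ, fun d => rfl, ?_, ?_⟩
  · exact (Homeomorph.mk ⟨Φ, Ψ, hleft, hright⟩ hcontΦ hcontΨ).isHomeomorph
  · intro t
    exact ⟨Ψ t, hright t, rfl⟩
end

section
/- Let F : L → H be a groupoid covering and let τ : H¹ ×_{s,H⁰,F⁰} L⁰ → L¹ be the inverse of the homeomorphism (F¹,s). Then the anchor map ρ := F⁰ : L⁰ → H⁰ together with the map (h,x) ↦ r(τ(h,x)) defines an action of H on the topological space L⁰, and the pair consisting of the identity map on L⁰ and τ on arrows is an isomorphism of topological groupoids from the transformation groupoid H ⋉ L⁰ onto L whose composition with F equals the canonical functor H ⋉ L⁰ → H. -/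
/-- for a groupoid covering `F : L → H` with `τ` the inverse of the
homeomorphism `(F¹, s)`, the anchor `ρ := F⁰` and `(h,x) ↦ r (τ (h,x))` define an
action of `H` on the space `L⁰`, and `(id, τ)` is an isomorphism of topological
groupoids from the transformation groupoid `H ⋉ L⁰` onto `L` whose composition with
`F` is the canonical functor `H ⋉ L⁰ → H`.  The transformation groupoid structure is
expressed by the intertwining relations satisfied by `τ`. -/
theorem covering_is_transformation_groupoid (L H : TopGroupoid)
    (F : ContFunctor L H) (hcov : IsCovering F)
    (τ : FibTarget F → L.Arr)
    (hτ₁ : ∀ l, τ (fibMap F l) = l) (hτ₂ : ∀ p, fibMap F (τ p) = p) :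
    -- `(h, x) ↦ r (τ (h, x))` is a continuous action of `H` on `L⁰` with anchor `F⁰`:
    Continuous (fun p : FibTarget F => L.r (τ p)) ∧
    (∀ p : FibTarget F, F.obj (L.r (τ p)) = H.r p.1.1) ∧
    (∀ x : L.Obj, L.r (τ ⟨(H.u (F.obj x), x), H.s_u (F.obj x)⟩) = x) ∧
    (∀ (h₁ h₂ : H.Arr) (x : L.Obj) (hc : H.s h₁ = H.r h₂) (hx : H.s h₂ = F.obj x),
      L.r (τ ⟨(H.m h₁ h₂, x), (H.s_m h₁ h₂ hc).trans hx⟩) =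
        L.r (τ ⟨(h₁, L.r (τ ⟨(h₂, x), hx⟩)), by
          have h1 : F.arr (τ ⟨(h₂, x), hx⟩) = h₂ :=
            congrArg (fun q : FibTarget F => q.1.1) (hτ₂ ⟨(h₂, x), hx⟩)
          rw [← F.r_arr, h1]; exact hc⟩)) ∧
    -- `(id, τ)` is an isomorphism of topological groupoids `H ⋉ L⁰ ≅ L`:
    IsHomeomorph τ ∧
    (∀ p : FibTarget F, L.s (τ p) = p.1.2) ∧
    (∀ x : L.Obj, τ ⟨(H.u (F.obj x), x), H.s_u (F.obj x)⟩ = L.u x) ∧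
    (∀ p : FibTarget F, L.i (τ p) = τ ⟨(H.i p.1.1, L.r (τ p)), by
        have h1 : F.arr (τ p) = p.1.1 :=
          congrArg (fun q : FibTarget F => q.1.1) (hτ₂ p)
        rw [← F.r_arr, h1, H.s_i]⟩) ∧
    (∀ (h₁ h₂ : H.Arr) (x : L.Obj) (hc : H.s h₁ = H.r h₂) (hx : H.s h₂ = F.obj x),
      τ ⟨(H.m h₁ h₂, x), (H.s_m h₁ h₂ hc).trans hx⟩ =
        L.m (τ ⟨(h₁, L.r (τ ⟨(h₂, x), hx⟩)), by
          have h1 : F.arr (τ ⟨(h₂, x), hx⟩) = h₂ :=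
            congrArg (fun q : FibTarget F => q.1.1) (hτ₂ ⟨(h₂, x), hx⟩)
          rw [← F.r_arr, h1]; exact hc⟩) (τ ⟨(h₂, x), hx⟩)) ∧
    -- the composition of `(id, τ)` with `F` is the canonical functor `H ⋉ L⁰ → H`:
    (∀ p : FibTarget F, F.arr (τ p) = p.1.1) ∧
    (∀ x : L.Obj, F.obj (id x) = F.obj x) := by

  have hF : ∀ p : FibTarget F, F.arr (τ p) = p.1.1 := fun p =>
    congrArg (fun q : FibTarget F => q.1.1) (hτ₂ p)
  have hS : ∀ p : FibTarget F, L.s (τ p) = p.1.2 := fun p =>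
    congrArg (fun q : FibTarget F => q.1.2) (hτ₂ p)
  -- τ is a homeomorphism
  obtain ⟨e, he⟩ := isHomeomorph_iff_exists_homeomorph.mp hcov
  have hτeq : τ = ⇑e.symm := by
    funext p
    apply e.injective
    rw [e.apply_symm_apply, he, hτ₂]
  have hτhom : IsHomeomorph τ := by rw [hτeq]; exact e.symm.isHomeomorph
  have hτcont : Continuous τ := hτhom.continuous
  -- unit
  have hu : ∀ x : L.Obj, τ ⟨(H.u (F.obj x), x), H.s_u (F.obj x)⟩ = L.u x := by
    intro x
    have : fibMap F (L.u x) = ⟨(H.u (F.obj x), x), H.s_u (F.obj x)⟩ := by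
      apply Subtype.ext
      show (F.arr (L.u x), L.s (L.u x)) = _
      rw [F.u_arr, L.s_u]
    rw [← this, hτ₁]
  -- multiplication
  have hm : ∀ (h₁ h₂ : H.Arr) (x : L.Obj) (hc : H.s h₁ = H.r h₂) (hx : H.s h₂ = F.obj x),
      τ ⟨(H.m h₁ h₂, x), (H.s_m h₁ h₂ hc).trans hx⟩ =
        L.m (τ ⟨(h₁, L.r (τ ⟨(h₂, x), hx⟩)), by
          have h1 : F.arr (τ ⟨(h₂, x), hx⟩) = h₂ :=
            congrArg (fun q : FibTarget F => q.1.1) (hτ₂ ⟨(h₂, x), hx⟩)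
          rw [← F.r_arr, h1]; exact hc⟩) (τ ⟨(h₂, x), hx⟩) := by
    intro h₁ h₂ x hc hx
    set b := τ ⟨(h₂, x), hx⟩ with hb
    set a := τ (⟨(h₁, L.r b), by
          have h1 : F.arr b = h₂ := hF _
          rw [← F.r_arr, h1]; exact hc⟩ : FibTarget F) with ha
    have hab : L.s a = L.r b := hS _
    have : fibMap F (L.m a b) = ⟨(H.m h₁ h₂, x), (H.s_m h₁ h₂ hc).trans hx⟩ := by
      apply Subtype.ext
      show (F.arr (L.m a b), L.s (L.m a b)) = (H.m h₁ h₂, x)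
      refine Prod.ext ?_ ?_
      · show F.arr (L.m a b) = H.m h₁ h₂
        rw [F.m_arr a b hab]
        exact congrArg₂ H.m (hF _) (hF _)
      · show L.s (L.m a b) = x
        rw [L.s_m a b hab]
        exact hS _
    rw [← this, hτ₁]
  refine ⟨L.cont_r.comp hτcont, fun p => by rw [← F.r_arr, hF], fun x => by rw [hu, L.r_u],
    fun h₁ h₂ x hc hx => ?_, hτhom, hS, hu, fun p => ?_, hm, hF, fun x => rfl⟩
  · rw [hm h₁ h₂ x hc hx, L.r_m _ _ (hS _)]
  · have : fibMap F (L.i (τ p)) = ⟨(H.i p.1.1, L.r (τ p)), by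
        rw [← F.r_arr, hF, H.s_i]⟩ := by
      apply Subtype.ext
      show (F.arr (L.i (τ p)), L.s (L.i (τ p))) = (H.i p.1.1, L.r (τ p))
      refine Prod.ext ?_ ?_
      · show F.arr (L.i (τ p)) = H.i p.1.1
        rw [F.i_arr]
        exact congrArg H.i (hF p)
      · exact L.s_i (τ p)
    rw [← this, hτ₁]
end

section
/- Let F : L → H be a groupoid fibration whose fibre G consists only of identity arrows, that is, G¹ = u(L⁰). Then F is a groupoid covering: the map (F¹,s) : L¹ → H¹ ×_{s,H⁰,F⁰} L⁰ is a homeomorphism. -/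
/-- a groupoid fibration whose fibre consists only of identity arrows
(`G¹ = u(L⁰)`) is a groupoid covering, i.e. `(F¹, s)` is a homeomorphism. -/
theorem fibration_with_space_fibre_is_covering (L H : TopGroupoid) (F : ContFunctor L H)
    (hF : IsFibration F) (hfib : fibreArr F = Set.range L.u) :
    IsHomeomorph (fibMap F) := by
  obtain ⟨hsurj, hopen⟩ := hF
  have hcont : Continuous (fibMap F) :=
    Continuous.subtype_mk (F.cont_arr.prodMk L.cont_s) _
  have hinj : Function.Injective (fibMap F) := by
    intro l₁ l₂ h
    have h1 : F.arr l₁ = F.arr l₂ := congrArg (fun p => p.1.1) h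
    have h2 : L.s l₁ = L.s l₂ := congrArg (fun p => p.1.2) h
    set g := L.m l₁ (L.i l₂) with hg
    have hc : L.s l₁ = L.r (L.i l₂) := by rw [L.r_i, h2]
    have hsg : L.s g = L.r l₂ := by rw [hg, L.s_m _ _ hc, L.s_i]
    have hmem : g ∈ fibreArr F := by
      show F.arr g = H.u (F.obj (L.s g))
      rw [hg, F.m_arr _ _ hc, F.i_arr, h1, H.m_i, F.r_arr, ← hg, hsg]
    rw [hfib] at hmem
    obtain ⟨x, hx⟩ := hmem
    have hxr : x = L.r l₂ := by rw [← hsg, ← hx, L.s_u]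
    have hgl2 : L.m g l₂ = l₂ := by rw [← hx, hxr, L.u_m]
    have hc2 : L.s (L.i l₂) = L.r l₂ := L.s_i l₂
    calc l₁ = L.m l₁ (L.u (L.s l₁)) := (L.m_u l₁).symm
      _ = L.m l₁ (L.m (L.i l₂) l₂) := by rw [h2, ← L.i_m]
      _ = L.m (L.m l₁ (L.i l₂)) l₂ := (L.m_assoc _ _ _ hc hc2).symm
      _ = l₂ := hgl2
  exact ⟨hcont, hopen, hinj, hsurj⟩
end

section
/- Let F : L → H be a groupoid fibration with fibre G. For h ∈ H¹ let L_h := (F¹)⁻¹({h}) ⊆ L¹ with the subspace topology, and for y ∈ H⁰ let G_y be the restriction of G to (F⁰)⁻¹({y}), so G_y¹ = {g ∈ G¹ : F⁰(s(g)) = y} and G_y⁰ = (F⁰)⁻¹({y}). Then: (a) the multiplication of L restricts to a left action of G_{r(h)} on L_h and a right action of G_{s(h)} on L_h, and these actions commute; (b) the restricted source map s : L_h → G_{s(h)}⁰ and restricted range map r : L_h → G_{r(h)}⁰ are open surjections; (c) the map G_{r(h)}¹ ×_{s,r} L_h := {(g,l) : s(g) = r(l)} → {(l₁,l₂) ∈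 L_h × L_h : s(l₁) = s(l₂)}, (g,l) ↦ (m(g,l), l), is a homeomorphism; (d) symmetrically, the map {(l,g) ∈ L_h × G_{s(h)}¹ : s(l) = r(g)} → {(l₁,l₂) ∈ L_h × L_h : r(l₁) = r(l₂)}, (l,g) ↦ (m(l,g), l), is a homeomorphism. In other words, L_h is a groupoid equivalence between G_{r(h)} and G_{s(h)}. -/
/-- Inversion is an involution in any topological groupoid. -/
lemma TopGroupoid.i_i_s4 (L : TopGroupoid) (g : L.Arr) : L.i (L.i g) = g := by
  have h1 : L.s g = L.r (L.i g) := (L.r_i g).symm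
  have h2 : L.s (L.i g) = L.r (L.i (L.i g)) := by rw [L.r_i, L.s_i]
  have h3 : L.r (L.i (L.i g)) = L.r g := by rw [L.r_i, L.s_i]
  symm
  calc g = L.m g (L.u (L.s g)) := (L.m_u g).symm
    _ = L.m g (L.m (L.i g) (L.i (L.i g))) := by rw [L.m_i (L.i g), L.r_i]
    _ = L.m (L.m g (L.i g)) (L.i (L.i g)) := (L.m_assoc _ _ _ h1 h2).symm
    _ = L.m (L.u (L.r g)) (L.i (L.i g)) := by rw [L.m_i]
    _ = L.i (L.i g) := by rw [← h3]; exact L.u_m _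

/-- Multiplication of pointwise composable continuous families is continuous. -/
lemma TopGroupoid.cont_m' (L : TopGroupoid) {X : Type*} [TopologicalSpace X]
    {f g : X → L.Arr} (hf : Continuous f) (hg : Continuous g)
    (hc : ∀ x, L.s (f x) = L.r (g x)) :
    Continuous fun x => L.m (f x) (g x) := by
  have : (fun x => L.m (f x) (g x)) =
      (fun p : {p : L.Arr × L.Arr // L.s p.1 = L.r p.2} => L.m p.1.1 p.1.2) ∘
        (fun x => ⟨(f x, g x), hc x⟩) := rfl
  rw [this]
  exact L.cont_m.comp (Continuous.subtype_mk (hf.prodMk hg) _)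

/-- The restricted source map `L_h → (F⁰)⁻¹(y)` is an open surjection, for a
groupoid fibration `F` and any `y` with `H.s h = y`. -/
lemma smap_open_surj {L H : TopGroupoid} (F : ContFunctor L H) (hF : IsFibration F)
    (h : H.Arr) (y : H.Obj) (hy : H.s h = y) :
    Function.Surjective (fun l : {l : L.Arr // F.arr l = h} =>
      (⟨L.s l.1, by rw [← F.s_arr, l.2, hy]⟩ : {x : L.Obj // F.obj x = y})) ∧
    IsOpenMap (fun l : {l : L.Arr // F.arr l = h} =>
      (⟨L.s l.1, by rw [← F.s_arr, l.2, hy]⟩ : {x : L.Obj // F.obj x = y})) := by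
  obtain ⟨hsurj, hopen⟩ := hF
  constructor
  · rintro ⟨x, hx⟩
    obtain ⟨l, hl⟩ := hsurj ⟨(h, x), hy.trans hx.symm⟩
    have hl' : F.arr l = h ∧ L.s l = x := by
      have := congrArg Subtype.val hl
      exact ⟨congrArg Prod.fst this, congrArg Prod.snd this⟩
    exact ⟨⟨l, hl'.1⟩, Subtype.ext hl'.2⟩
  · intro W hW
    obtain ⟨V, hV, rfl⟩ := isOpen_induced_iff.mp hW
    have he : Continuous (fun x : {x : L.Obj // F.obj x = y} =>
        (⟨(h, x.1), hy.trans x.2.symm⟩ : FibTarget F)) :=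
      Continuous.subtype_mk (continuous_const.prodMk continuous_subtype_val) _
    have key : (fun l : {l : L.Arr // F.arr l = h} =>
        (⟨L.s l.1, by rw [← F.s_arr, l.2, hy]⟩ : {x : L.Obj // F.obj x = y})) ''
          (Subtype.val ⁻¹' V) =
        (fun x : {x : L.Obj // F.obj x = y} =>
          (⟨(h, x.1), hy.trans x.2.symm⟩ : FibTarget F)) ⁻¹' (fibMap F '' V) := by
      ext ⟨x, hx⟩
      constructor
      · rintro ⟨⟨l, hl⟩, hlV, hlx⟩
        refine ⟨l, hlV, ?_⟩
        have : L.s l = x := congrArg Subtype.val hlx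
        exact Subtype.ext (Prod.ext hl this)
      · rintro ⟨l, hlV, hl⟩
        have := congrArg Subtype.val hl
        have h1 : F.arr l = h := congrArg Prod.fst this
        have h2 : L.s l = x := congrArg Prod.snd this
        exact ⟨⟨l, h1⟩, hlV, Subtype.ext h2⟩
    rw [key]
    exact (hopen V hV).preimage he

/-- for a groupoid fibration `F : L → H` with fibre `G` and `h ∈ H¹`,
the set `L_h = (F¹)⁻¹(h)` carries commuting left and right actions of `G_{r h}` and
`G_{s h}` by multiplication, its restricted source and range maps are open
surjections, and both multiplication maps are homeomorphisms onto the corresponding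
fibre products, i.e. `L_h` is a groupoid equivalence between `G_{r h}` and `G_{s h}`. -/
theorem Lh_is_groupoid_equivalence (L H : TopGroupoid) (F : ContFunctor L H)
    (hF : IsFibration F) (h : H.Arr) :
    -- (a) left action of `G_{r h}`, right action of `G_{s h}`, and they commute:
    (∀ g l, g ∈ fibreArr F → F.obj (L.s g) = H.r h → F.arr l = h →
      L.s g = L.r l → F.arr (L.m g l) = h) ∧
    (∀ l g, F.arr l = h → g ∈ fibreArr F → F.obj (L.s g) = H.s h →
      L.s l = L.r g → F.arr (L.m l g) = h) ∧
    (∀ g l g', g ∈ fibreArr F → F.obj (L.s g) = H.r h → F.arr l = h →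
      g' ∈ fibreArr F → F.obj (L.s g') = H.s h →
      L.s g = L.r l → L.s l = L.r g' →
      L.m (L.m g l) g' = L.m g (L.m l g')) ∧
    -- (b) the restricted source and range maps are open surjections:
    Function.Surjective (fun l : {l : L.Arr // F.arr l = h} =>
      (⟨L.s l.1, (F.s_arr l.1).symm.trans (congrArg H.s l.2)⟩ :
        {x : L.Obj // F.obj x = H.s h})) ∧
    IsOpenMap (fun l : {l : L.Arr // F.arr l = h} =>
      (⟨L.s l.1, (F.s_arr l.1).symm.trans (congrArg H.s l.2)⟩ :
        {x : L.Obj // F.obj x = H.s h})) ∧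
    Function.Surjective (fun l : {l : L.Arr // F.arr l = h} =>
      (⟨L.r l.1, (F.r_arr l.1).symm.trans (congrArg H.r l.2)⟩ :
        {x : L.Obj // F.obj x = H.r h})) ∧
    IsOpenMap (fun l : {l : L.Arr // F.arr l = h} =>
      (⟨L.r l.1, (F.r_arr l.1).symm.trans (congrArg H.r l.2)⟩ :
        {x : L.Obj // F.obj x = H.r h})) ∧
    -- (c) `(g, l) ↦ (m(g,l), l)` is a homeomorphism
    --     `G_{r h}¹ ×_{s,r} L_h ≅ L_h ×_{s,s} L_h`:
    (∃ Φ : {p : L.Arr × L.Arr //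
          (p.1 ∈ fibreArr F ∧ F.obj (L.s p.1) = H.r h) ∧ F.arr p.2 = h ∧
            L.s p.1 = L.r p.2} →
        {p : L.Arr × L.Arr // F.arr p.1 = h ∧ F.arr p.2 = h ∧ L.s p.1 = L.s p.2},
      (∀ d, (Φ d : L.Arr × L.Arr) = (L.m d.1.1 d.1.2, d.1.2)) ∧ IsHomeomorph Φ) ∧
    -- (d) `(l, g) ↦ (m(l,g), l)` is a homeomorphism
    --     `L_h ×_{s,r} G_{s h}¹ ≅ L_h ×_{r,r} L_h`:
    (∃ Ψ : {p : L.Arr × L.Arr //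
          F.arr p.1 = h ∧ (p.2 ∈ fibreArr F ∧ F.obj (L.s p.2) = H.s h) ∧
            L.s p.1 = L.r p.2} →
        {p : L.Arr × L.Arr // F.arr p.1 = h ∧ F.arr p.2 = h ∧ L.r p.1 = L.r p.2},
      (∀ d, (Ψ d : L.Arr × L.Arr) = (L.m d.1.1 d.1.2, d.1.1)) ∧ IsHomeomorph Ψ) := by

  have a1 : ∀ g l, g ∈ fibreArr F → F.obj (L.s g) = H.r h → F.arr l = h →
      L.s g = L.r l → F.arr (L.m g l) = h := by
    intro g l hg hgr hl hc
    have hg' : F.arr g = H.u (F.obj (L.s g)) := hg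
    rw [F.m_arr g l hc, hg', hgr, hl, H.u_m]
  have a2 : ∀ l g, F.arr l = h → g ∈ fibreArr F → F.obj (L.s g) = H.s h →
      L.s l = L.r g → F.arr (L.m l g) = h := by
    intro l g hl hg hgs hc
    have hg' : F.arr g = H.u (F.obj (L.s g)) := hg
    rw [F.m_arr l g hc, hl, hg', hgs]
    exact H.m_u h
  have sb := smap_open_surj F hF h (H.s h) rfl
  have rb := smap_open_surj F hF (H.i h) (H.r h) (H.s_i h)
  let E : {l : L.Arr // F.arr l = h} ≃ₜ {l : L.Arr // F.arr l = H.i h} :=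
    { toFun := fun l => ⟨L.i l.1, by rw [F.i_arr, l.2]⟩
      invFun := fun l => ⟨L.i l.1, by rw [F.i_arr, l.2, H.i_i_s4]⟩
      left_inv := fun l => Subtype.ext (L.i_i_s4 _)
      right_inv := fun l => Subtype.ext (L.i_i_s4 _)
      continuous_toFun := Continuous.subtype_mk (L.cont_i.comp continuous_subtype_val)
        (fun l => by show F.arr (L.i l.1) = H.i h; rw [F.i_arr, l.2])
      continuous_invFun := Continuous.subtype_mk (L.cont_i.comp continuous_subtype_val)
        (fun l => by show F.arr (L.i l.1) = h; rw [F.i_arr, l.2, H.i_i_s4]) }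
  have hcomp : (fun l : {l : L.Arr // F.arr l = h} =>
      (⟨L.r l.1, (F.r_arr l.1).symm.trans (congrArg H.r l.2)⟩ :
        {x : L.Obj // F.obj x = H.r h})) =
      (fun l' : {l : L.Arr // F.arr l = H.i h} =>
        (⟨L.s l'.1, by rw [← F.s_arr, l'.2, H.s_i]⟩ :
          {x : L.Obj // F.obj x = H.r h})) ∘ ⇑E := by
    funext l
    exact Subtype.ext (L.s_i l.1).symm
  refine ⟨a1, a2, fun g l g' _ _ _ _ _ hc1 hc2 => L.m_assoc g l g' hc1 hc2,
    sb.1, sb.2, ?_, ?_, ?_, ?_⟩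
  · rw [hcomp]; exact rb.1.comp E.surjective
  · rw [hcomp]; exact rb.2.comp E.isOpenMap
  · -- part (c)
    have hΦ : ∀ d : {p : L.Arr × L.Arr //
          (p.1 ∈ fibreArr F ∧ F.obj (L.s p.1) = H.r h) ∧ F.arr p.2 = h ∧
            L.s p.1 = L.r p.2},
        F.arr (L.m d.1.1 d.1.2) = h ∧ F.arr d.1.2 = h ∧
          L.s (L.m d.1.1 d.1.2) = L.s d.1.2 :=
      fun d => ⟨a1 _ _ d.2.1.1 d.2.1.2 d.2.2.1 d.2.2.2, d.2.2.1, L.s_m _ _ d.2.2.2⟩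
    have hinv : ∀ c : {p : L.Arr × L.Arr //
          F.arr p.1 = h ∧ F.arr p.2 = h ∧ L.s p.1 = L.s p.2},
        ((L.m c.1.1 (L.i c.1.2)) ∈ fibreArr F ∧
          F.obj (L.s (L.m c.1.1 (L.i c.1.2))) = H.r h) ∧
        F.arr c.1.2 = h ∧ L.s (L.m c.1.1 (L.i c.1.2)) = L.r c.1.2 := by
      rintro ⟨⟨l₁, l₂⟩, h1, h2, h3⟩
      have hcm : L.s l₁ = L.r (L.i l₂) := by rw [L.r_i]; exact h3
      have hs : L.s (L.m l₁ (L.i l₂)) = L.r l₂ := by rw [L.s_m _ _ hcm, L.s_i]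
      have hobj : F.obj (L.r l₂) = H.r h := by rw [← F.r_arr, h2]
      refine ⟨⟨?_, ?_⟩, h2, hs⟩
      · show F.arr (L.m l₁ (L.i l₂)) = H.u (F.obj (L.s (L.m l₁ (L.i l₂))))
        rw [F.m_arr _ _ hcm, F.i_arr, h1, h2, H.m_i, hs, hobj]
      · rw [hs, hobj]
    let EΦ : {p : L.Arr × L.Arr //
          (p.1 ∈ fibreArr F ∧ F.obj (L.s p.1) = H.r h) ∧ F.arr p.2 = h ∧
            L.s p.1 = L.r p.2} ≃ₜ
        {p : L.Arr × L.Arr // F.arr p.1 = h ∧ F.arr p.2 = h ∧ L.s p.1 = L.s p.2} :=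
      { toFun := fun d => ⟨(L.m d.1.1 d.1.2, d.1.2), hΦ d⟩
        invFun := fun c => ⟨(L.m c.1.1 (L.i c.1.2), c.1.2), hinv c⟩
        left_inv := fun d => Subtype.ext (Prod.ext (by
          show L.m (L.m d.1.1 d.1.2) (L.i d.1.2) = d.1.1
          have hc := d.2.2.2
          rw [L.m_assoc _ _ _ hc (L.r_i _).symm, L.m_i, ← hc, L.m_u]) rfl)
        right_inv := fun c => Subtype.ext (Prod.ext (by
          show L.m (L.m c.1.1 (L.i c.1.2)) c.1.2 = c.1.1
          have h3 := c.2.2.2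
          rw [L.m_assoc _ _ _ (by rw [L.r_i]; exact h3) (L.s_i _), L.i_m,
            ← h3, L.m_u]) rfl)
        continuous_toFun := Continuous.subtype_mk
          ((L.cont_m' continuous_subtype_val.fst continuous_subtype_val.snd
            (fun d => d.2.2.2)).prodMk continuous_subtype_val.snd) _
        continuous_invFun := Continuous.subtype_mk
          ((L.cont_m' continuous_subtype_val.fst
            (L.cont_i.comp continuous_subtype_val.snd)
            (fun c => by show L.s c.1.1 = L.r (L.i c.1.2); rw [L.r_i]; exact c.2.2.2)).prodMk
            continuous_subtype_val.snd) _ }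
    exact ⟨⇑EΦ, fun d => rfl, EΦ.isHomeomorph⟩
  · -- part (d)
    have hΨ : ∀ d : {p : L.Arr × L.Arr //
          F.arr p.1 = h ∧ (p.2 ∈ fibreArr F ∧ F.obj (L.s p.2) = H.s h) ∧
            L.s p.1 = L.r p.2},
        F.arr (L.m d.1.1 d.1.2) = h ∧ F.arr d.1.1 = h ∧
          L.r (L.m d.1.1 d.1.2) = L.r d.1.1 :=
      fun d => ⟨a2 _ _ d.2.1 d.2.2.1.1 d.2.2.1.2 d.2.2.2, d.2.1, L.r_m _ _ d.2.2.2⟩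
    have hinv : ∀ c : {p : L.Arr × L.Arr //
          F.arr p.1 = h ∧ F.arr p.2 = h ∧ L.r p.1 = L.r p.2},
        F.arr c.1.2 = h ∧
        ((L.m (L.i c.1.2) c.1.1) ∈ fibreArr F ∧
          F.obj (L.s (L.m (L.i c.1.2) c.1.1)) = H.s h) ∧
        L.s c.1.2 = L.r (L.m (L.i c.1.2) c.1.1) := by
      rintro ⟨⟨l₁, l₂⟩, h1, h2, h3⟩
      have hcm : L.s (L.i l₂) = L.r l₁ := by rw [L.s_i]; exact h3.symm
      have hs : L.s (L.m (L.i l₂) l₁) = L.s l₁ := L.s_m _ _ hcm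
      have hobj : F.obj (L.s l₁) = H.s h := by rw [← F.s_arr, h1]
      have hr : L.s l₂ = L.r (L.m (L.i l₂) l₁) := by rw [L.r_m _ _ hcm, L.r_i]
      refine ⟨h2, ⟨?_, ?_⟩, hr⟩
      · show F.arr (L.m (L.i l₂) l₁) = H.u (F.obj (L.s (L.m (L.i l₂) l₁)))
        rw [F.m_arr _ _ hcm, F.i_arr, h1, h2, H.i_m, hs, hobj]
      · rw [hs, hobj]
    let EΨ : {p : L.Arr × L.Arr //
          F.arr p.1 = h ∧ (p.2 ∈ fibreArr F ∧ F.obj (L.s p.2) = H.s h) ∧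
            L.s p.1 = L.r p.2} ≃ₜ
        {p : L.Arr × L.Arr // F.arr p.1 = h ∧ F.arr p.2 = h ∧ L.r p.1 = L.r p.2} :=
      { toFun := fun d => ⟨(L.m d.1.1 d.1.2, d.1.1), hΨ d⟩
        invFun := fun c => ⟨(c.1.2, L.m (L.i c.1.2) c.1.1), hinv c⟩
        left_inv := fun d => Subtype.ext (Prod.ext rfl (by
          show L.m (L.i d.1.1) (L.m d.1.1 d.1.2) = d.1.2
          have hc := d.2.2.2
          rw [← L.m_assoc _ _ _ (L.s_i _) hc, L.i_m, hc, L.u_m]))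
        right_inv := fun c => Subtype.ext (Prod.ext (by
          show L.m c.1.2 (L.m (L.i c.1.2) c.1.1) = c.1.1
          have h3 := c.2.2.2
          rw [← L.m_assoc _ _ _ (L.r_i _).symm (by rw [L.s_i]; exact h3.symm),
            L.m_i, ← h3, L.u_m]) rfl)
        continuous_toFun := Continuous.subtype_mk
          ((L.cont_m' continuous_subtype_val.fst continuous_subtype_val.snd
            (fun d => d.2.2.2)).prodMk continuous_subtype_val.fst) _
        continuous_invFun := Continuous.subtype_mk
          (continuous_subtype_val.snd.prodMk
            (L.cont_m' (L.cont_i.comp continuous_subtype_val.snd)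
              continuous_subtype_val.fst
              (fun c => by show L.s (L.i c.1.2) = L.r c.1.1; rw [L.s_i]; exact c.2.2.2.symm))) _ }
    exact ⟨⇑EΨ, fun d => rfl, EΨ.isHomeomorph⟩
end

section
/- For any classical action of a topological groupoid H on a topological groupoid G, the transformation-groupoid data makes L = H ⋉ G a topological groupoid. In particular: all structure maps are well defined (for (h₁,g₁), (h₂,g₂) ∈ L¹ with s(g₁) = h₂·r(g₂), the element (m(h₁,h₂), m(i(h₂)·g₁, g₂)) lies in L¹); the source and range of the product are s(g₂) and h₁·r(g₁) respectively; (u(r_H(x)), u(x)) is a unit arrow at x for each x ∈ G⁰; (i(h), h·i(g)) is a two-sided inverse of (h,g); the multiplication is associative and continuous, inversion is a homeomorphism; and the source map L¹ → L⁰ = G⁰, (h,g) ↦ s(g), is a continuous open surjection. -/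
/-- A classical action of a topological groupoid `H` on a topological groupoid `G`:
continuous actions of `H` on the spaces `G⁰` and `G¹` (with anchor maps `ρ` and
`ρ ∘ r = ρ ∘ s`) such that `r`, `s` and the multiplication of `G` are
`H`-equivariant. -/
structure ClassicalAction (H G : TopGroupoid) where
  ρ : G.Obj → H.Obj
  cont_ρ : Continuous ρ
  ρ_r_s : ∀ g : G.Arr, ρ (G.r g) = ρ (G.s g)
  act₀ : H.Arr → G.Obj → G.Obj
  act₁ : H.Arr → G.Arr → G.Arr
  cont_act₀ : Continuous
    (fun p : {p : H.Arr × G.Obj // H.s p.1 = ρ p.2} => act₀ p.1.1 p.1.2)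
  cont_act₁ : Continuous
    (fun p : {p : H.Arr × G.Arr // H.s p.1 = ρ (G.r p.2)} => act₁ p.1.1 p.1.2)
  ρ_act₀ : ∀ h x, H.s h = ρ x → ρ (act₀ h x) = H.r h
  u_act₀ : ∀ x, act₀ (H.u (ρ x)) x = x
  m_act₀ : ∀ h₁ h₂ x, H.s h₁ = H.r h₂ → H.s h₂ = ρ x →
    act₀ (H.m h₁ h₂) x = act₀ h₁ (act₀ h₂ x)
  r_act₁ : ∀ h g, H.s h = ρ (G.r g) → G.r (act₁ h g) = act₀ h (G.r g)
  s_act₁ : ∀ h g, H.s h = ρ (G.r g) → G.s (act₁ h g) = act₀ h (G.s g)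
  u_act₁ : ∀ g, act₁ (H.u (ρ (G.r g))) g = g
  m_act₁ : ∀ h₁ h₂ g, H.s h₁ = H.r h₂ → H.s h₂ = ρ (G.r g) →
    act₁ (H.m h₁ h₂) g = act₁ h₁ (act₁ h₂ g)
  mul_equivariant : ∀ h g₁ g₂, G.s g₁ = G.r g₂ → H.s h = ρ (G.r g₁) →
    act₁ h (G.m g₁ g₂) = G.m (act₁ h g₁) (act₁ h g₂)

/-- The arrow space `H¹ ×_{s,H⁰,r_H} G¹` of the transformation groupoid `H ⋉ G`
of a classical action (with the subspace topology). -/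
abbrev TransArr {H G : TopGroupoid} (A : ClassicalAction H G) : Type :=
  {p : H.Arr × G.Arr // H.s p.1 = A.ρ (G.r p.2)}
namespace TopGroupoid

theorem inv_unique (K : TopGroupoid) (a b : K.Arr) (hc : K.s a = K.r b)
    (h1 : K.m a b = K.u (K.r a)) (h2 : K.m b a = K.u (K.s a)) : b = K.i a := by
  have hsb : K.s b = K.r a := by
    have h := K.s_m a b hc
    rw [h1, K.s_u] at h; exact h.symm
  calc b = K.m b (K.u (K.s b)) := (K.m_u b).symm
    _ = K.m b (K.m a (K.i a)) := by rw [hsb, K.m_i]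
    _ = K.m (K.m b a) (K.i a) := (K.m_assoc b a (K.i a) hsb (by rw [K.r_i])).symm
    _ = K.m (K.u (K.r (K.i a))) (K.i a) := by rw [h2, K.r_i]
    _ = K.i a := K.u_m _

theorem i_i_s6 (K : TopGroupoid) (a : K.Arr) : K.i (K.i a) = a :=
  (K.inv_unique (K.i a) a (K.s_i a) (by rw [K.i_m, K.r_i]) (by rw [K.m_i, K.s_i])).symm

theorem i_u_s6 (K : TopGroupoid) (x : K.Obj) : K.i (K.u x) = K.u x := by
  have hm : K.m (K.u x) (K.u x) = K.u x := by
    have h := K.u_m (K.u x); rwa [K.r_u] at h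
  refine (K.inv_unique (K.u x) (K.u x) (by rw [K.s_u, K.r_u]) ?_ ?_).symm
  · rw [hm, K.r_u]
  · rw [hm, K.s_u]

theorem i_mul (K : TopGroupoid) (g₁ g₂ : K.Arr) (h : K.s g₁ = K.r g₂) :
    K.i (K.m g₁ g₂) = K.m (K.i g₂) (K.i g₁) := by
  have hrr : K.r g₂ = K.s g₁ := h.symm
  have hc1 : K.s (K.i g₂) = K.r (K.i g₁) := by rw [K.s_i, K.r_i, hrr]
  refine (K.inv_unique (K.m g₁ g₂) (K.m (K.i g₂) (K.i g₁)) ?_ ?_ ?_).symm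
  · rw [K.s_m _ _ h, K.r_m _ _ hc1, K.r_i]
  · have e1 : K.m (K.m g₁ g₂) (K.i g₂) = g₁ := by
      rw [K.m_assoc g₁ g₂ (K.i g₂) h (by rw [K.r_i]), K.m_i, ← h, K.m_u]
    rw [← K.m_assoc (K.m g₁ g₂) (K.i g₂) (K.i g₁)
        (by rw [K.s_m _ _ h, K.r_i]) hc1, e1, K.m_i, K.r_m _ _ h]
  · have e1 : K.m (K.m (K.i g₂) (K.i g₁)) g₁ = K.i g₂ := by
      rw [K.m_assoc (K.i g₂) (K.i g₁) g₁ hc1 (K.s_i g₁), K.i_m, h, ← K.s_i g₂, K.m_u]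
    rw [← K.m_assoc (K.m (K.i g₂) (K.i g₁)) g₁ g₂
        (by rw [K.s_m _ _ hc1, K.s_i]) h, e1, K.i_m, K.s_m _ _ h]

theorem idem_unit (K : TopGroupoid) (e : K.Arr) (hse : K.s e = K.r e)
    (hm : K.m e e = e) : e = K.u (K.s e) := by
  calc e = K.m (K.u (K.r e)) e := (K.u_m e).symm
    _ = K.m (K.m (K.i e) e) e := by rw [K.i_m, hse]
    _ = K.m (K.i e) (K.m e e) := K.m_assoc _ _ _ (K.s_i e) hse
    _ = K.m (K.i e) e := by rw [hm]
    _ = K.u (K.s e) := K.i_m e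

end TopGroupoid
namespace ClassicalAction

variable {H G : TopGroupoid} (A : ClassicalAction H G)

theorem act₀_cancel (h : H.Arr) (x : G.Obj) (hs : H.s h = A.ρ x) :
    A.act₀ (H.i h) (A.act₀ h x) = x := by
  rw [← A.m_act₀ (H.i h) h x (H.s_i h) hs, H.i_m, hs, A.u_act₀]

theorem act_u (h : H.Arr) (x : G.Obj) (hs : H.s h = A.ρ x) :
    A.act₁ h (G.u x) = G.u (A.act₀ h x) := by
  have hsr : H.s h = A.ρ (G.r (G.u x)) := by rw [G.r_u]; exact hs
  have hre : G.r (A.act₁ h (G.u x)) = A.act₀ h x := by rw [A.r_act₁ h _ hsr, G.r_u]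
  have hse : G.s (A.act₁ h (G.u x)) = A.act₀ h x := by rw [A.s_act₁ h _ hsr, G.s_u]
  have huu : G.m (G.u x) (G.u x) = G.u x := by
    have h2 := G.u_m (G.u x); rwa [G.r_u] at h2
  have hm : G.m (A.act₁ h (G.u x)) (A.act₁ h (G.u x)) = A.act₁ h (G.u x) := by
    rw [← A.mul_equivariant h (G.u x) (G.u x) (by rw [G.s_u, G.r_u]) hsr, huu]
  have h3 := G.idem_unit _ (by rw [hse, hre]) hm
  rw [h3, hse]

theorem act_i (h : H.Arr) (g : G.Arr) (hs : H.s h = A.ρ (G.r g)) :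
    A.act₁ h (G.i g) = G.i (A.act₁ h g) := by
  have hs' : H.s h = A.ρ (G.r (G.i g)) := by rw [G.r_i, ← A.ρ_r_s]; exact hs
  refine G.inv_unique _ _ ?_ ?_ ?_
  · rw [A.s_act₁ h g hs, A.r_act₁ h (G.i g) hs', G.r_i]
  · rw [← A.mul_equivariant h g (G.i g) (by rw [G.r_i]) hs, G.m_i,
      A.act_u h _ hs, A.r_act₁ h g hs]
  · rw [← A.mul_equivariant h (G.i g) g (by rw [G.s_i]) hs', G.i_m,
      A.act_u h (G.s g) (by rw [hs, A.ρ_r_s]), A.s_act₁ h g hs]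

theorem comp_L1 (p q : TransArr A) (hc : G.s p.1.2 = A.act₀ q.1.1 (G.r q.1.2)) :
    A.ρ (G.r p.1.2) = H.r q.1.1 := by
  rw [A.ρ_r_s, hc, A.ρ_act₀ _ _ q.2]

theorem comp_L2 (p q : TransArr A) (hc : G.s p.1.2 = A.act₀ q.1.1 (G.r q.1.2)) :
    H.s (H.i q.1.1) = A.ρ (G.r p.1.2) := by rw [H.s_i, A.comp_L1 p q hc]

theorem comp_L3 (p q : TransArr A) (hc : G.s p.1.2 = A.act₀ q.1.1 (G.r q.1.2)) :
    G.s (A.act₁ (H.i q.1.1) p.1.2) = G.r q.1.2 := by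
  rw [A.s_act₁ _ _ (A.comp_L2 p q hc), hc, A.act₀_cancel _ _ q.2]

theorem comp_L4 (p q : TransArr A) (hc : G.s p.1.2 = A.act₀ q.1.1 (G.r q.1.2)) :
    G.r (A.act₁ (H.i q.1.1) p.1.2) = A.act₀ (H.i q.1.1) (G.r p.1.2) :=
  A.r_act₁ _ _ (A.comp_L2 p q hc)

theorem invWellDef (p : TransArr A) :
    H.s (H.i p.1.1) = A.ρ (G.r (A.act₁ p.1.1 (G.i p.1.2))) := by
  have hs' : H.s p.1.1 = A.ρ (G.r (G.i p.1.2)) := by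
    rw [G.r_i, ← A.ρ_r_s]; exact p.2
  rw [A.r_act₁ _ _ hs', A.ρ_act₀ _ _ hs', H.s_i]

end ClassicalAction

/-- The inversion of the transformation groupoid, as a map of the arrow space. -/
def trInv {H G : TopGroupoid} (A : ClassicalAction H G) (p : TransArr A) : TransArr A :=
  ⟨(H.i p.1.1, A.act₁ p.1.1 (G.i p.1.2)), A.invWellDef p⟩

theorem openMap_pullback {X Y Z : Type} [TopologicalSpace X] [TopologicalSpace Y]
    [TopologicalSpace Z] {f : X → Z} {g : Y → Z} (hf : IsOpenMap f) (hg : Continuous g) :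
    IsOpenMap (fun p : {p : X × Y // f p.1 = g p.2} => p.1.2) := by
  intro U hU
  rcases isOpen_induced_iff.mp hU with ⟨V, hV, rfl⟩
  rw [isOpen_iff_forall_mem_open]
  rintro y ⟨⟨⟨x, y'⟩, hxy⟩, hpV, rfl⟩
  obtain ⟨W₁, W₂, hW₁, hW₂, hx, hy, hsub⟩ := isOpen_prod_iff.mp hV x y' hpV
  refine ⟨W₂ ∩ g ⁻¹' (f '' W₁), ?_, (hW₂.inter ((hf W₁ hW₁).preimage hg)),
    hy, x, hx, hxy⟩
  rintro z ⟨hz2, x', hx'W, hx'z⟩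
  exact ⟨⟨(x', z), hx'z⟩, hsub ⟨hx'W, hz2⟩, rfl⟩
/-- the transformation-groupoid data of a classical action of `H` on `G`
makes `L = H ⋉ G` a topological groupoid: the multiplication is well defined, its
source and range are as stated, `(u (r_H x), u x)` is a unit, `(i h, h · i g)` is a
two-sided inverse of `(h, g)`, multiplication is associative and continuous,
inversion is a homeomorphism, and the source map is a continuous open surjection. -/
theorem transformation_groupoid_of_classical_action (H G : TopGroupoid)
    (A : ClassicalAction H G) :
    -- the product `(m(h₁,h₂), m(i(h₂)·g₁, g₂))` again lies in `L¹`: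
    (∀ p q : TransArr A, G.s p.1.2 = A.act₀ q.1.1 (G.r q.1.2) →
      H.s (H.m p.1.1 q.1.1) =
        A.ρ (G.r (G.m (A.act₁ (H.i q.1.1) p.1.2) q.1.2))) ∧
    -- source and range of the product:
    (∀ p q : TransArr A, G.s p.1.2 = A.act₀ q.1.1 (G.r q.1.2) →
      G.s (G.m (A.act₁ (H.i q.1.1) p.1.2) q.1.2) = G.s q.1.2) ∧
    (∀ p q : TransArr A, G.s p.1.2 = A.act₀ q.1.1 (G.r q.1.2) →
      A.act₀ (H.m p.1.1 q.1.1) (G.r (G.m (A.act₁ (H.i q.1.1) p.1.2) q.1.2)) =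
        A.act₀ p.1.1 (G.r p.1.2)) ∧
    -- `(u (r_H x), u x)` is a unit arrow at `x`:
    (∀ x : G.Obj,
      H.s (H.u (A.ρ x)) = A.ρ (G.r (G.u x)) ∧
      G.s (G.u x) = x ∧ A.act₀ (H.u (A.ρ x)) (G.r (G.u x)) = x) ∧
    (∀ p : TransArr A,
      -- left neutrality of the unit at the range of `p`:
      ((H.m (H.u (A.ρ (A.act₀ p.1.1 (G.r p.1.2)))) p.1.1,
        G.m (A.act₁ (H.i p.1.1) (G.u (A.act₀ p.1.1 (G.r p.1.2)))) p.1.2) :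
          H.Arr × G.Arr) = p.1 ∧
      -- right neutrality of the unit at the source of `p`:
      ((H.m p.1.1 (H.u (A.ρ (G.s p.1.2))),
        G.m (A.act₁ (H.i (H.u (A.ρ (G.s p.1.2)))) p.1.2) (G.u (G.s p.1.2))) :
          H.Arr × G.Arr) = p.1) ∧
    -- `(i h, h · i g)` is a two-sided inverse of `(h, g)`:
    (∀ p : TransArr A,
      H.s (H.i p.1.1) = A.ρ (G.r (A.act₁ p.1.1 (G.i p.1.2))) ∧
      ((H.m (H.i p.1.1) p.1.1,
        G.m (A.act₁ (H.i p.1.1) (A.act₁ p.1.1 (G.i p.1.2))) p.1.2) :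
          H.Arr × G.Arr) =
        (H.u (A.ρ (G.s p.1.2)), G.u (G.s p.1.2)) ∧
      ((H.m p.1.1 (H.i p.1.1),
        G.m (A.act₁ (H.i (H.i p.1.1)) p.1.2) (A.act₁ p.1.1 (G.i p.1.2))) :
          H.Arr × G.Arr) =
        (H.u (A.ρ (A.act₀ p.1.1 (G.r p.1.2))), G.u (A.act₀ p.1.1 (G.r p.1.2)))) ∧
    -- the inversion map is a homeomorphism of `L¹`:
    (∃ Inv : TransArr A → TransArr A,
      (∀ p, (Inv p : H.Arr × G.Arr) = (H.i p.1.1, A.act₁ p.1.1 (G.i p.1.2))) ∧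
      IsHomeomorph Inv) ∧
    -- the multiplication is associative:
    (∀ p q t : TransArr A,
      G.s p.1.2 = A.act₀ q.1.1 (G.r q.1.2) →
      G.s q.1.2 = A.act₀ t.1.1 (G.r t.1.2) →
      ((H.m (H.m p.1.1 q.1.1) t.1.1,
        G.m (A.act₁ (H.i t.1.1) (G.m (A.act₁ (H.i q.1.1) p.1.2) q.1.2)) t.1.2) :
          H.Arr × G.Arr) =
      (H.m p.1.1 (H.m q.1.1 t.1.1),
        G.m (A.act₁ (H.i (H.m q.1.1 t.1.1)) p.1.2)
          (G.m (A.act₁ (H.i t.1.1) q.1.2) t.1.2))) ∧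
    -- the multiplication is continuous on the set of composable pairs:
    Continuous (fun pq : {pq : TransArr A × TransArr A //
        G.s pq.1.1.2 = A.act₀ pq.2.1.1 (G.r pq.2.1.2)} =>
      ((H.m pq.1.1.1.1 pq.1.2.1.1,
        G.m (A.act₁ (H.i pq.1.2.1.1) pq.1.1.1.2) pq.1.2.1.2) : H.Arr × G.Arr)) ∧
    -- the source map is a continuous open surjection:
    Continuous (fun p : TransArr A => G.s p.1.2) ∧
    IsOpenMap (fun p : TransArr A => G.s p.1.2) ∧
    Function.Surjective (fun p : TransArr A => G.s p.1.2) := by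

  refine ⟨?_, ?_, ?_, ?_, ?_, ?_, ?_, ?_, ?_, ?_, ?_, ?_⟩
  · -- well-definedness of the product
    intro p q hc
    rw [G.r_m _ _ (A.comp_L3 p q hc), A.comp_L4 p q hc,
      H.s_m _ _ (p.2.trans (A.comp_L1 p q hc)), A.ρ_act₀ _ _ (A.comp_L2 p q hc), H.r_i]
  · -- source of the product
    intro p q hc
    exact G.s_m _ _ (A.comp_L3 p q hc)
  · -- range of the product
    intro p q hc
    have h12 : H.s p.1.1 = H.r q.1.1 := p.2.trans (A.comp_L1 p q hc)
    rw [G.r_m _ _ (A.comp_L3 p q hc), A.comp_L4 p q hc,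
      ← A.m_act₀ (H.m p.1.1 q.1.1) (H.i q.1.1) (G.r p.1.2)
        (by rw [H.s_m _ _ h12, H.r_i]) (A.comp_L2 p q hc),
      H.m_assoc _ _ _ h12 (by rw [H.r_i]), H.m_i, ← h12, H.m_u]
  · -- the unit arrow
    intro x
    exact ⟨by rw [H.s_u, G.r_u], G.s_u x, by rw [G.r_u, A.u_act₀]⟩
  · -- neutrality of units
    intro p
    obtain ⟨⟨h, g⟩, hp⟩ := p
    constructor
    · have h1 : A.ρ (A.act₀ h (G.r g)) = H.r h := A.ρ_act₀ _ _ hp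
      have h2 : A.act₁ (H.i h) (G.u (A.act₀ h (G.r g))) = G.u (G.r g) := by
        rw [A.act_u (H.i h) _ (by rw [H.s_i, h1]), A.act₀_cancel _ _ hp]
      rw [h1, h2, G.u_m, H.u_m]
    · rw [H.i_u_s6, ← A.ρ_r_s, A.u_act₁, G.m_u, ← hp, H.m_u]
  · -- two-sided inverses
    intro p
    obtain ⟨⟨h, g⟩, hp⟩ := p
    have hs' : H.s h = A.ρ (G.r (G.i g)) := by rw [G.r_i, ← A.ρ_r_s]; exact hp
    refine ⟨A.invWellDef ⟨(h, g), hp⟩, ?_, ?_⟩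
    · have e1 : A.act₁ (H.i h) (A.act₁ h (G.i g)) = G.i g := by
        rw [← A.m_act₁ (H.i h) h (G.i g) (H.s_i h) hs', H.i_m, hp, A.ρ_r_s,
          ← G.r_i g, A.u_act₁]
      rw [e1, G.i_m, H.i_m, hp, A.ρ_r_s]
    · have h1 : A.ρ (A.act₀ h (G.r g)) = H.r h := A.ρ_act₀ _ _ hp
      rw [H.i_i_s6, ← A.mul_equivariant h g (G.i g) (by rw [G.r_i]) hp, G.m_i,
        A.act_u h _ hp, H.m_i, h1]
  · -- inversion is a homeomorphism
    refine ⟨trInv A, fun p => rfl, ?_⟩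
    have hinv : Function.Involutive (trInv A) := by
      intro p
      obtain ⟨⟨h, g⟩, hp⟩ := p
      have hs' : H.s h = A.ρ (G.r (G.i g)) := by rw [G.r_i, ← A.ρ_r_s]; exact hp
      apply Subtype.ext
      show (H.i (H.i h), A.act₁ (H.i h) (G.i (A.act₁ h (G.i g)))) = (h, g)
      rw [H.i_i_s6, ← A.act_i h (G.i g) hs', G.i_i_s6,
        ← A.m_act₁ (H.i h) h g (H.s_i h) hp, H.i_m, hp, A.u_act₁]
    have hcont : Continuous (trInv A) := by
      apply Continuous.subtype_mk
      apply Continuous.prodMk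
      · exact H.cont_i.comp (continuous_fst.comp continuous_subtype_val)
      · have hmap : Continuous (fun p : TransArr A =>
            (⟨(p.1.1, G.i p.1.2), by rw [G.r_i, ← A.ρ_r_s]; exact p.2⟩ : TransArr A)) := by
          apply Continuous.subtype_mk
          exact (continuous_fst.comp continuous_subtype_val).prodMk
            (G.cont_i.comp (continuous_snd.comp continuous_subtype_val))
        exact A.cont_act₁.comp hmap
    exact (Homeomorph.mk (hinv.toPerm _) hcont hcont).isHomeomorph
  · -- associativity
    intro p q t hc1 hc2
    have h12 : H.s p.1.1 = H.r q.1.1 := p.2.trans (A.comp_L1 p q hc1)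
    have h23 : H.s q.1.1 = H.r t.1.1 := q.2.trans (A.comp_L1 q t hc2)
    have ha : H.s (H.i t.1.1) = A.ρ (G.r (A.act₁ (H.i q.1.1) p.1.2)) := by
      rw [A.comp_L4 p q hc1, A.ρ_act₀ _ _ (A.comp_L2 p q hc1), H.r_i, H.s_i, h23]
    have key : A.act₁ (H.i t.1.1) (A.act₁ (H.i q.1.1) p.1.2)
        = A.act₁ (H.i (H.m q.1.1 t.1.1)) p.1.2 := by
      rw [← A.m_act₁ (H.i t.1.1) (H.i q.1.1) p.1.2
        (by rw [H.s_i, H.r_i, h23]) (A.comp_L2 p q hc1), H.i_mul _ _ h23]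
    have cond1 : G.s (A.act₁ (H.i t.1.1) (A.act₁ (H.i q.1.1) p.1.2))
        = G.r (A.act₁ (H.i t.1.1) q.1.2) := by
      rw [A.s_act₁ _ _ ha, A.r_act₁ _ _ (A.comp_L2 q t hc2), A.comp_L3 p q hc1]
    rw [A.mul_equivariant (H.i t.1.1) _ _ (A.comp_L3 p q hc1) ha,
      G.m_assoc _ _ _ cond1 (A.comp_L3 q t hc2), key, H.m_assoc _ _ _ h12 h23]
  · -- continuity of the multiplication
    apply Continuous.prodMk
    · exact H.cont_m.comp (Continuous.subtype_mk
        ((continuous_fst.comp (continuous_subtype_val.comp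
            (continuous_fst.comp continuous_subtype_val))).prodMk
          (continuous_fst.comp (continuous_subtype_val.comp
            (continuous_snd.comp continuous_subtype_val))))
        (fun pq => (pq.1.1.2).trans (A.comp_L1 pq.1.1 pq.1.2 pq.2)))
    · have cA : Continuous (fun pq : {pq : TransArr A × TransArr A //
          G.s pq.1.1.2 = A.act₀ pq.2.1.1 (G.r pq.2.1.2)} =>
          A.act₁ (H.i pq.1.2.1.1) pq.1.1.1.2) := by
        refine A.cont_act₁.comp (Continuous.subtype_mk
          (((H.cont_i.comp (continuous_fst.comp (continuous_subtype_val.comp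
              (continuous_snd.comp continuous_subtype_val)))).prodMk
            (continuous_snd.comp (continuous_subtype_val.comp
              (continuous_fst.comp continuous_subtype_val)))))
          (fun pq => A.comp_L2 pq.1.1 pq.1.2 pq.2))
      exact G.cont_m.comp (Continuous.subtype_mk
        (cA.prodMk (continuous_snd.comp (continuous_subtype_val.comp
          (continuous_snd.comp continuous_subtype_val))))
        (fun pq => A.comp_L3 pq.1.1 pq.1.2 pq.2))
  · -- continuity of the source map
    exact G.cont_s.comp (continuous_snd.comp continuous_subtype_val)
  · -- openness of the source map
    exact G.open_s.comp
      (openMap_pullback (f := H.s) (g := fun y => A.ρ (G.r y)) H.open_s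
        (A.cont_ρ.comp G.cont_r))
  · -- surjectivity of the source map
    intro x
    exact ⟨⟨(H.u (A.ρ x), G.u x), by rw [H.s_u, G.r_u]⟩, G.s_u x⟩
end

section
/- Let F : L → H be a groupoid fibration with fibre G. Then F comes from a classical action of H on G — that is, there exist a classical action of H on G with anchor map r_H = F⁰ and an isomorphism of topological groupoids from the transformation groupoid H ⋉ G onto L which is the identity on objects and intertwines the canonical fibration H ⋉ G → H with F — if and only if there exists an actor from H to L that makes F¹ H-equivariant, i.e., an action • of H on the space L¹ with anchor ρ = F⁰∘r such that s(h•l) = s(l) and h•m(l₁,l₂) = m(h•l₁, l₂) for all composable l₁, l₂ ∈ L¹ and h ∈ H¹ with s(h) = ρ(l₁), and F¹(h•l) = m(h, F¹(l)) for all h ∈ H¹, l ∈ L¹ with s(h) = ρ(l). -/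
namespace TopGroupoid
variable (G : TopGroupoid)

lemma i_u_s8 (x : G.Obj) : G.i (G.u x) = G.u x := by
  have h1 := G.m_i (G.u x)
  rw [G.r_u] at h1
  have h2 := G.u_m (G.i (G.u x))
  rw [G.r_i, G.s_u] at h2
  rw [h1] at h2
  exact h2.symm

lemma inv_unique_s8 {g c : G.Arr} (hc : G.s g = G.r c) (h : G.m g c = G.u (G.r g)) :
    c = G.i g := by
  have h2 := G.u_m c
  rw [← hc, ← G.i_m g, G.m_assoc _ _ _ (G.s_i g) hc, h] at h2
  have h3 := G.m_u (G.i g)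
  rw [G.s_i g] at h3
  rw [h3] at h2
  exact h2.symm

lemma i_i_s8 (a : G.Arr) : G.i (G.i a) = a :=
  (G.inv_unique_s8 (G.s_i a) (by rw [G.r_i]; exact G.i_m a)).symm

lemma i_mm {a b : G.Arr} (h : G.s a = G.r b) :
    G.i (G.m a b) = G.m (G.i b) (G.i a) := by
  have hib : G.s (G.i b) = G.r (G.i a) := by rw [G.s_i, G.r_i, h]
  refine (G.inv_unique_s8 ?_ ?_).symm
  · rw [G.s_m a b h, G.r_m _ _ hib, G.r_i]
  · rw [G.r_m a b h, G.m_assoc a b _ h (by rw [G.r_m _ _ hib, G.r_i]),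
      ← G.m_assoc b (G.i b) (G.i a) (by rw [G.r_i]) hib, G.m_i b, ← h, ← G.r_i a,
      G.u_m]
    exact G.m_i a

end TopGroupoid

/-- a groupoid fibration `F : L → H` with fibre `G` comes from a
classical action of `H` on `G` (a classical action with anchor `r_H = F⁰` together
with an isomorphism of topological groupoids from `H ⋉ G` onto `L` which is the
identity on objects and intertwines the canonical fibration with `F`) if and only
if there is an actor from `H` to `L` making `F¹` `H`-equivariant (an action `•` of
`H` on `L¹` with anchor `F⁰ ∘ r` such that `s (h • l) = s l`,
`h • m(l₁,l₂) = m(h • l₁, l₂)` and `F¹(h • l) = m(h, F¹ l)`). -/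
theorem fibration_comes_from_classical_action_iff_actor
    (L H : TopGroupoid) (F : ContFunctor L H) (hF : IsFibration F) :
    -- LHS: `F` comes from a classical action of `H` on the fibre `G`:
    (∃ (act₀ : H.Arr → L.Obj → L.Obj) (act₁ : H.Arr → L.Arr → L.Arr),
      -- a continuous action of `H` on `G⁰ = L⁰` with anchor `F⁰`:
      Continuous (fun p : {p : H.Arr × L.Obj // H.s p.1 = F.obj p.2} =>
        act₀ p.1.1 p.1.2) ∧
      (∀ h x, H.s h = F.obj x → F.obj (act₀ h x) = H.r h) ∧
      (∀ x : L.Obj, act₀ (H.u (F.obj x)) x = x) ∧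
      (∀ h₁ h₂ x, H.s h₁ = H.r h₂ → H.s h₂ = F.obj x →
        act₀ (H.m h₁ h₂) x = act₀ h₁ (act₀ h₂ x)) ∧
      -- a continuous action of `H` on `G¹` with anchor `F⁰ ∘ r`:
      Continuous (fun p : {p : H.Arr × L.Arr //
          p.2 ∈ fibreArr F ∧ H.s p.1 = F.obj (L.r p.2)} => act₁ p.1.1 p.1.2) ∧
      (∀ h g, g ∈ fibreArr F → H.s h = F.obj (L.r g) → act₁ h g ∈ fibreArr F) ∧
      -- `r`, `s` are `H`-equivariant:
      (∀ h g, g ∈ fibreArr F → H.s h = F.obj (L.r g) →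
        L.r (act₁ h g) = act₀ h (L.r g) ∧ L.s (act₁ h g) = act₀ h (L.s g)) ∧
      (∀ g, g ∈ fibreArr F → act₁ (H.u (F.obj (L.r g))) g = g) ∧
      (∀ h₁ h₂ g, g ∈ fibreArr F → H.s h₁ = H.r h₂ → H.s h₂ = F.obj (L.r g) →
        act₁ (H.m h₁ h₂) g = act₁ h₁ (act₁ h₂ g)) ∧
      -- the multiplication of `G` is `H`-equivariant:
      (∀ h g₁ g₂, g₁ ∈ fibreArr F → g₂ ∈ fibreArr F → L.s g₁ = L.r g₂ →
        H.s h = F.obj (L.r g₁) →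
        act₁ h (L.m g₁ g₂) = L.m (act₁ h g₁) (act₁ h g₂)) ∧
      -- an isomorphism `H ⋉ G ≅ L`, identity on objects, intertwining `F` with
      -- the canonical fibration `(h, g) ↦ h`:
      (∃ Φ : {p : H.Arr × L.Arr //
            p.2 ∈ fibreArr F ∧ H.s p.1 = F.obj (L.r p.2)} → L.Arr,
        IsHomeomorph Φ ∧
        (∀ p, L.s (Φ p) = L.s p.1.2) ∧
        (∀ p, L.r (Φ p) = act₀ p.1.1 (L.r p.1.2)) ∧
        (∀ x : L.Obj,
          Φ ⟨(H.u (F.obj x), L.u x),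
            ⟨(F.u_arr x).trans
                (congrArg (fun z => H.u (F.obj z)) (L.s_u x).symm),
              (H.s_u (F.obj x)).trans (congrArg F.obj (L.r_u x).symm)⟩⟩ = L.u x) ∧
        (∀ (p q : {p : H.Arr × L.Arr //
              p.2 ∈ fibreArr F ∧ H.s p.1 = F.obj (L.r p.2)})
            (_hc : L.s p.1.2 = act₀ q.1.1 (L.r q.1.2))
            (hmem : L.m (act₁ (H.i q.1.1) p.1.2) q.1.2 ∈ fibreArr F ∧
              H.s (H.m p.1.1 q.1.1) =
                F.obj (L.r (L.m (act₁ (H.i q.1.1) p.1.2) q.1.2))),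
          Φ ⟨(H.m p.1.1 q.1.1, L.m (act₁ (H.i q.1.1) p.1.2) q.1.2), hmem⟩ =
            L.m (Φ p) (Φ q)) ∧
        (∀ p, F.arr (Φ p) = p.1.1)))
    ↔
    -- RHS: there is an actor from `H` to `L` making `F¹` `H`-equivariant:
    (∃ act : H.Arr → L.Arr → L.Arr,
      Continuous (fun p : {p : H.Arr × L.Arr // H.s p.1 = F.obj (L.r p.2)} =>
        act p.1.1 p.1.2) ∧
      (∀ h l, H.s h = F.obj (L.r l) → F.obj (L.r (act h l)) = H.r h) ∧
      (∀ l : L.Arr, act (H.u (F.obj (L.r l))) l = l) ∧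
      (∀ h₁ h₂ l, H.s h₁ = H.r h₂ → H.s h₂ = F.obj (L.r l) →
        act (H.m h₁ h₂) l = act h₁ (act h₂ l)) ∧
      (∀ h l, H.s h = F.obj (L.r l) → L.s (act h l) = L.s l) ∧
      (∀ h l₁ l₂, H.s h = F.obj (L.r l₁) → L.s l₁ = L.r l₂ →
        act h (L.m l₁ l₂) = L.m (act h l₁) l₂) ∧
      (∀ h l, H.s h = F.obj (L.r l) → F.arr (act h l) = H.m h (F.arr l))) := by
  constructor
  · -- forward: classical action ⇒ actor
    rintro ⟨act₀, act₁, c0, anch0, unit0, mul0, c1, mem1, rs1, unit1, mul1, gmul1,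
      Φ, hΦ, sΦ, rΦ, uΦ, mΦ, FΦ⟩
    classical
    have fibEq : ∀ g ∈ fibreArr F, F.obj (L.r g) = F.obj (L.s g) := by
      intro g hg
      have hg' : F.arr g = H.u (F.obj (L.s g)) := hg
      have h1 := F.r_arr g
      rw [hg', H.r_u] at h1
      exact h1.symm
    have fibMul : ∀ a b : L.Arr, a ∈ fibreArr F → b ∈ fibreArr F →
        L.s a = L.r b → L.m a b ∈ fibreArr F := by
      intro a b ha hb c
      have ha' : F.arr a = H.u (F.obj (L.s a)) := ha
      have hb' : F.arr b = H.u (F.obj (L.s b)) := hb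
      show F.arr _ = _
      rw [F.m_arr _ _ c, ha', hb', L.s_m _ _ c, c, fibEq b hb]
      have h1 := H.u_m (H.u (F.obj (L.s b)))
      rwa [H.r_u] at h1
    obtain ⟨E, hE⟩ := isHomeomorph_iff_exists_homeomorph.mp hΦ
    set Ψ : L.Arr → {p : H.Arr × L.Arr //
        p.2 ∈ fibreArr F ∧ H.s p.1 = F.obj (L.r p.2)} := fun l => E.symm l
      with hΨdef
    have ΦΨ : ∀ l, Φ (Ψ l) = l := by
      intro l
      show Φ (E.symm l) = l
      conv_lhs => rw [← hE]
      exact E.apply_symm_apply l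
    have ΨΦ : ∀ p, Ψ (Φ p) = p := by
      intro p
      show E.symm (Φ p) = p
      conv_lhs => rw [← hE]
      exact E.symm_apply_apply p
    have cΨc : Continuous Ψ := E.symm.continuous
    have key : ∀ l : L.Arr, F.obj (L.r l) = H.r (Ψ l).1.1 := by
      intro l
      conv_lhs => rw [← ΦΨ l]
      rw [rΦ (Ψ l), anch0 _ _ (Ψ l).2.2]
    have hF1 : ∀ l : L.Arr, F.arr l = (Ψ l).1.1 := by
      intro l
      conv_lhs => rw [← ΦΨ l]
      rw [FΦ (Ψ l)]
    have hs : ∀ l : L.Arr, L.s l = L.s (Ψ l).1.2 := by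
      intro l
      conv_lhs => rw [← ΦΨ l]
      rw [sΦ (Ψ l)]
    have hr : ∀ l : L.Arr, L.r l = act₀ (Ψ l).1.1 (L.r (Ψ l).1.2) := by
      intro l
      conv_lhs => rw [← ΦΨ l]
      rw [rΦ (Ψ l)]
    have memA : ∀ (h : H.Arr) (l : L.Arr), H.s h = F.obj (L.r l) →
        ((Ψ l).1.2 ∈ fibreArr F ∧
          H.s (H.m h (Ψ l).1.1) = F.obj (L.r (Ψ l).1.2)) := by
      intro h l hc
      refine ⟨(Ψ l).2.1, ?_⟩
      rw [H.s_m _ _ (hc.trans (key l))]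
      exact (Ψ l).2.2
    refine ⟨fun h l => if hc : H.s h = F.obj (L.r l) then
        Φ ⟨(H.m h (Ψ l).1.1, (Ψ l).1.2), memA h l hc⟩ else l,
      ?_, ?_, ?_, ?_, ?_, ?_, ?_⟩
    · -- continuity
      refine Continuous.congr (f := fun p : {p : H.Arr × L.Arr //
          H.s p.1 = F.obj (L.r p.2)} =>
          Φ ⟨(H.m p.1.1 (Ψ p.1.2).1.1, (Ψ p.1.2).1.2), memA _ _ p.2⟩) ?_
        (fun p => by simp only [dif_pos p.2])
      have c2' : Continuous (fun p : {p : H.Arr × L.Arr //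
          H.s p.1 = F.obj (L.r p.2)} => Ψ p.1.2) :=
        cΨc.comp (continuous_snd.comp continuous_subtype_val)
      exact hΦ.continuous.comp (Continuous.subtype_mk
        ((H.cont_m.comp (Continuous.subtype_mk
            ((continuous_fst.comp continuous_subtype_val).prodMk
              (continuous_fst.comp (continuous_subtype_val.comp c2')))
            (fun p => p.2.trans (key p.1.2)))).prodMk
          (continuous_snd.comp (continuous_subtype_val.comp c2')))
        (fun p => memA _ _ p.2))
    · -- anchor
      intro h l hc
      simp only [dif_pos hc]
      rw [rΦ, anch0 _ _ (memA h l hc).2, H.r_m _ _ (hc.trans (key l))]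
    · -- unit
      intro l
      have hc : H.s (H.u (F.obj (L.r l))) = F.obj (L.r l) := H.s_u _
      simp only [dif_pos hc]
      have e1 : H.m (H.u (F.obj (L.r l))) (Ψ l).1.1 = (Ψ l).1.1 := by
        rw [key l, H.u_m]
      have e2 : (⟨(H.m (H.u (F.obj (L.r l))) (Ψ l).1.1, (Ψ l).1.2),
          memA _ _ hc⟩ : {p : H.Arr × L.Arr //
            p.2 ∈ fibreArr F ∧ H.s p.1 = F.obj (L.r p.2)}) = Ψ l :=
        Subtype.ext (Prod.ext e1 rfl)
      exact (congrArg Φ e2).trans (ΦΨ l)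
    · -- associativity
      intro h₁ h₂ l h12 hc2
      have hc12 : H.s (H.m h₁ h₂) = F.obj (L.r l) := by
        rw [H.s_m _ _ h12]; exact hc2
      simp only [dif_pos hc12, dif_pos hc2]
      have hq' : H.s h₁ = F.obj (L.r (Φ (⟨(H.m h₂ (Ψ l).1.1, (Ψ l).1.2),
          memA h₂ l hc2⟩ : {p : H.Arr × L.Arr //
            p.2 ∈ fibreArr F ∧ H.s p.1 = F.obj (L.r p.2)}))) := by
        rw [rΦ, anch0 _ _ (memA h₂ l hc2).2, H.r_m _ _ (hc2.trans (key l))]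
        exact h12
      rw [dif_pos hq']
      refine congrArg Φ (Subtype.ext (Prod.ext ?_ ?_))
      · show H.m (H.m h₁ h₂) (Ψ l).1.1 =
          H.m h₁ (Ψ (Φ ⟨(H.m h₂ (Ψ l).1.1, (Ψ l).1.2), memA h₂ l hc2⟩)).1.1
        rw [ΨΦ]
        exact H.m_assoc h₁ h₂ _ h12 (hc2.trans (key l))
      · show (Ψ l).1.2 =
          (Ψ (Φ ⟨(H.m h₂ (Ψ l).1.1, (Ψ l).1.2), memA h₂ l hc2⟩)).1.2
        rw [ΨΦ]
    · -- source preserved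
      intro h l hc
      simp only [dif_pos hc]
      rw [sΦ]
      exact (hs l).symm
    · -- equivariance for multiplication
      intro h l₁ l₂ hc c
      have hcm : H.s h = F.obj (L.r (L.m l₁ l₂)) := by
        rw [L.r_m _ _ c]; exact hc
      simp only [dif_pos hcm, dif_pos hc]
      have hcΦ : L.s (Ψ l₁).1.2 = act₀ (Ψ l₂).1.1 (L.r (Ψ l₂).1.2) := by
        rw [← hs l₁, c, hr l₂]
      have k1 : F.obj (L.r (Ψ l₁).1.2) = H.r (Ψ l₂).1.1 := by
        rw [fibEq _ (Ψ l₁).2.1, hcΦ, anch0 _ _ (Ψ l₂).2.2]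
      have h12' : H.s (Ψ l₁).1.1 = H.r (Ψ l₂).1.1 := (Ψ l₁).2.2.trans k1
      have memX : act₁ (H.i (Ψ l₂).1.1) (Ψ l₁).1.2 ∈ fibreArr F :=
        mem1 _ _ (Ψ l₁).2.1 (by rw [H.s_i, k1])
      have compX : L.s (act₁ (H.i (Ψ l₂).1.1) (Ψ l₁).1.2) = L.r (Ψ l₂).1.2 := by
        rw [(rs1 _ _ (Ψ l₁).2.1 (by rw [H.s_i, k1])).2, hcΦ,
          ← mul0 _ _ _ (by rw [H.s_i]) (Ψ l₂).2.2, H.i_m, (Ψ l₂).2.2, unit0]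
      have fibM : L.m (act₁ (H.i (Ψ l₂).1.1) (Ψ l₁).1.2) (Ψ l₂).1.2 ∈ fibreArr F :=
        fibMul _ _ memX (Ψ l₂).2.1 compX
      have mem2 : H.s (H.m (Ψ l₁).1.1 (Ψ l₂).1.1) =
          F.obj (L.r (L.m (act₁ (H.i (Ψ l₂).1.1) (Ψ l₁).1.2) (Ψ l₂).1.2)) := by
        rw [H.s_m _ _ h12', L.r_m _ _ compX,
          (rs1 _ _ (Ψ l₁).2.1 (by rw [H.s_i, k1])).1,
          anch0 _ _ (by rw [H.s_i, k1]), H.r_i]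
      have hmul := mΦ (Ψ l₁) (Ψ l₂) hcΦ ⟨fibM, mem2⟩
      rw [ΦΨ l₁, ΦΨ l₂] at hmul
      have hΨm : Ψ (L.m l₁ l₂) = ⟨(H.m (Ψ l₁).1.1 (Ψ l₂).1.1,
          L.m (act₁ (H.i (Ψ l₂).1.1) (Ψ l₁).1.2) (Ψ l₂).1.2), fibM, mem2⟩ := by
        rw [← hmul, ΨΦ]
      have mem2' : H.s (H.m (H.m h (Ψ l₁).1.1) (Ψ l₂).1.1) =
          F.obj (L.r (L.m (act₁ (H.i (Ψ l₂).1.1) (Ψ l₁).1.2) (Ψ l₂).1.2)) := by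
        rw [H.s_m _ _ (by rw [H.s_m _ _ (hc.trans (key l₁))]; exact h12'),
          L.r_m _ _ compX, (rs1 _ _ (Ψ l₁).2.1 (by rw [H.s_i, k1])).1,
          anch0 _ _ (by rw [H.s_i, k1]), H.r_i]
      have hmul' := mΦ ⟨(H.m h (Ψ l₁).1.1, (Ψ l₁).1.2), memA h l₁ hc⟩ (Ψ l₂)
        hcΦ ⟨fibM, mem2'⟩
      rw [ΦΨ l₂] at hmul'
      rw [← hmul']
      refine congrArg Φ (Subtype.ext (Prod.ext ?_ ?_))
      · show H.m h (Ψ (L.m l₁ l₂)).1.1 = H.m (H.m h (Ψ l₁).1.1) (Ψ l₂).1.1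
        rw [hΨm]
        exact (H.m_assoc h _ _ (hc.trans (key l₁)) h12').symm
      · show (Ψ (L.m l₁ l₂)).1.2 =
          L.m (act₁ (H.i (Ψ l₂).1.1) (Ψ l₁).1.2) (Ψ l₂).1.2
        rw [hΨm]
    · -- F-equivariance
      intro h l hc
      simp only [dif_pos hc]
      rw [FΦ, hF1 l]
  · -- backward: actor ⇒ classical action
    rintro ⟨act, cA, aAnchor, aUnit, aMul, aS, aM, aF⟩
    have fibEq : ∀ g ∈ fibreArr F, F.obj (L.r g) = F.obj (L.s g) := by
      intro g hg
      have hg' : F.arr g = H.u (F.obj (L.s g)) := hg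
      have h1 := F.r_arr g
      rw [hg', H.r_u] at h1
      exact h1.symm
    have K1 : ∀ h l, H.s h = F.obj (L.r l) →
        act h l = L.m (act h (L.u (L.r l))) l := by
      intro h l hh
      conv_lhs => rw [← L.u_m l]
      exact aM h (L.u (L.r l)) l (by rw [L.r_u]; exact hh) (L.s_u (L.r l))
    have K2 : ∀ h l, H.s h = F.obj (L.r l) →
        L.r (act h l) = L.r (act h (L.u (L.r l))) := by
      intro h l hh
      rw [K1 h l hh,
        L.r_m _ _ (by rw [aS h (L.u (L.r l)) (by rw [L.r_u]; exact hh), L.s_u])]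
    refine ⟨fun h x => L.r (act h (L.u x)),
      fun h g => L.m (act h g) (L.i (act h (L.u (L.s g)))),
      ?_, ?_, ?_, ?_, ?_, ?_, ?_, ?_, ?_, ?_, ?_⟩
    · -- continuity of act₀
      exact L.cont_r.comp (cA.comp (Continuous.subtype_mk
        ((continuous_fst.comp continuous_subtype_val).prodMk
          (L.cont_u.comp (continuous_snd.comp continuous_subtype_val)))
        (fun p => by
          show H.s p.1.1 = F.obj (L.r (L.u p.1.2))
          rw [L.r_u]; exact p.2)))
    · -- anchor of act₀
      intro h x hx
      exact aAnchor h (L.u x) (by rw [L.r_u]; exact hx)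
    · -- unit of act₀
      intro x
      show L.r (act (H.u (F.obj x)) (L.u x)) = x
      have h1 := aUnit (L.u x)
      rw [L.r_u] at h1
      rw [h1, L.r_u]
    · -- mult of act₀
      intro h₁ h₂ x h12 h2x
      show L.r (act (H.m h₁ h₂) (L.u x)) = L.r (act h₁ (L.u (L.r (act h₂ (L.u x)))))
      have a2 : H.s h₂ = F.obj (L.r (L.u x)) := by rw [L.r_u]; exact h2x
      rw [aMul h₁ h₂ (L.u x) h12 a2,
        K2 h₁ (act h₂ (L.u x)) (by rw [aAnchor h₂ (L.u x) a2]; exact h12)]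
    · -- continuity of act₁
      refine L.cont_m.comp (Continuous.subtype_mk (Continuous.prodMk
        (cA.comp (Continuous.subtype_mk continuous_subtype_val (fun p => p.2.2)))
        (L.cont_i.comp (cA.comp (Continuous.subtype_mk
          ((continuous_fst.comp continuous_subtype_val).prodMk
            (L.cont_u.comp (L.cont_s.comp (continuous_snd.comp continuous_subtype_val))))
          (fun p => by
            show H.s p.1.1 = F.obj (L.r (L.u (L.s p.1.2)))
            rw [L.r_u]; exact p.2.2.trans (fibEq _ p.2.1))))))
        (fun p => ?_))
      · -- s (act h g) = r (i (act h (u (s g))))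
        show L.s (act p.1.1 p.1.2) = L.r (L.i (act p.1.1 (L.u (L.s p.1.2))))
        rw [L.r_i, aS _ _ p.2.2,
          aS _ _ (by rw [L.r_u]; exact p.2.2.trans (fibEq _ p.2.1)), L.s_u]
    · -- act₁ maps fibre to fibre
      intro h g hg hh
      have hg' : F.arr g = H.u (F.obj (L.s g)) := hg
      have hsg : H.s h = F.obj (L.s g) := hh.trans (fibEq g hg)
      have hA : H.s h = F.obj (L.r (L.u (L.s g))) := by rw [L.r_u]; exact hsg
      have FA : F.arr (act h (L.u (L.s g))) = h := by
        rw [aF h _ hA, F.u_arr, ← hsg, H.m_u]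
      have Fg : F.arr (act h g) = h := by
        rw [aF h g hh, hg', ← hsg, H.m_u]
      have comp : L.s (act h g) = L.r (L.i (act h (L.u (L.s g)))) := by
        rw [L.r_i, aS h _ hA, L.s_u, aS h g hh]
      show F.arr _ = _
      rw [F.m_arr _ _ comp, F.i_arr, FA, Fg, H.m_i, L.s_m _ _ comp, L.s_i,
        aAnchor h _ hA]
    · -- r, s equivariance of act₁
      intro h g hg hh
      have hsg : H.s h = F.obj (L.s g) := hh.trans (fibEq g hg)
      have hA : H.s h = F.obj (L.r (L.u (L.s g))) := by rw [L.r_u]; exact hsg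
      have comp : L.s (act h g) = L.r (L.i (act h (L.u (L.s g)))) := by
        rw [L.r_i, aS h _ hA, L.s_u, aS h g hh]
      constructor
      · rw [L.r_m _ _ comp, K2 h g hh]
      · rw [L.s_m _ _ comp, L.s_i]
    · -- unit of act₁
      intro g hg
      show L.m (act (H.u (F.obj (L.r g))) g)
        (L.i (act (H.u (F.obj (L.r g))) (L.u (L.s g)))) = g
      have h1 := aUnit (L.u (L.s g))
      rw [L.r_u, ← fibEq g hg] at h1
      rw [aUnit g, h1, L.i_u_s8, L.m_u]
    · -- mult of act₁
      intro h₁ h₂ g hg h12 h2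
      have h2' : H.s h₂ = F.obj (L.s g) := h2.trans (fibEq g hg)
      have hA₂ : H.s h₂ = F.obj (L.r (L.u (L.s g))) := by rw [L.r_u]; exact h2'
      set b := act h₂ g with hb
      set A₂ := act h₂ (L.u (L.s g)) with hA₂def
      have hsA₂ : L.s A₂ = L.s g := by rw [hA₂def, aS _ _ hA₂, L.s_u]
      have h1b : H.s h₁ = F.obj (L.r b) := by rw [hb, aAnchor h₂ g h2]; exact h12
      have h1A₂ : H.s h₁ = F.obj (L.r A₂) := by
        rw [hA₂def, aAnchor h₂ _ hA₂]; exact h12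
      have compg' : L.s b = L.r (L.i A₂) := by
        rw [L.r_i, hsA₂, hb, aS h₂ g h2]
      have s12 : H.s (H.m h₁ h₂) = H.s h₂ := H.s_m h₁ h₂ h12
      have sg' : L.s (L.m b (L.i A₂)) = L.r A₂ := by rw [L.s_m _ _ compg', L.s_i]
      -- step1
      have step1 : act h₁ (L.m b (L.i A₂)) = L.m (act h₁ b) (L.i A₂) :=
        aM h₁ b (L.i A₂) h1b compg'
      -- X := act h₁ (u (r A₂))
      have hXanchor : H.s h₁ = F.obj (L.r (L.u (L.r A₂))) := by
        rw [L.r_u]; exact h1A₂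
      have sX : L.s (act h₁ (L.u (L.r A₂))) = L.r A₂ := by
        rw [aS h₁ _ hXanchor, L.s_u]
      have step2 : act h₁ (L.u (L.s (L.m b (L.i A₂)))) =
          L.m (act h₁ A₂) (L.i A₂) := by
        rw [sg', K1 h₁ A₂ h1A₂,
          L.m_assoc _ _ _ sX (by rw [L.r_i]), L.m_i]
        have mu := L.m_u (act h₁ (L.u (L.r A₂)))
        rw [sX] at mu
        exact mu.symm
      show L.m (act (H.m h₁ h₂) g) (L.i (act (H.m h₁ h₂) (L.u (L.s g)))) =
        L.m (act h₁ (L.m b (L.i A₂)))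
          (L.i (act h₁ (L.u (L.s (L.m b (L.i A₂))))))
      rw [aMul h₁ h₂ g h12 h2, aMul h₁ h₂ (L.u (L.s g)) h12 hA₂, step1, step2,
        L.i_mm (by rw [aS h₁ A₂ h1A₂, L.r_i]), L.i_i_s8]
      -- goal: m (act h₁ b) (i (act h₁ A₂)) = m (m (act h₁ b) (i A₂)) (m A₂ (i (act h₁ A₂)))
      have c1 : L.s (act h₁ b) = L.r (L.i A₂) := by
        rw [L.r_i, hsA₂, aS h₁ b h1b, hb, aS h₂ g h2]
      have c2 : L.s (L.i A₂) = L.r (L.m A₂ (L.i (act h₁ A₂))) := by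
        rw [L.s_i, L.r_m _ _ (by rw [L.r_i, aS h₁ A₂ h1A₂])]
      rw [L.m_assoc _ _ _ c1 c2,
        ← L.m_assoc (L.i A₂) A₂ (L.i (act h₁ A₂)) (by rw [L.s_i])
          (by rw [L.r_i, aS h₁ A₂ h1A₂]), L.i_m]
      have tail := L.u_m (L.i (act h₁ A₂))
      rw [L.r_i, aS h₁ A₂ h1A₂] at tail
      rw [tail]
    · -- G-mult equivariance of act₁
      intro h g₁ g₂ hg₁ hg₂ c hh
      have hh1' : H.s h = F.obj (L.s g₁) := hh.trans (fibEq g₁ hg₁)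
      have hh2 : H.s h = F.obj (L.r g₂) := by rw [← c]; exact hh1'
      have hh2' : H.s h = F.obj (L.s g₂) := hh2.trans (fibEq g₂ hg₂)
      have hA₁ : H.s h = F.obj (L.r (L.u (L.s g₁))) := by rw [L.r_u]; exact hh1'
      have hA₂ : H.s h = F.obj (L.r (L.u (L.s g₂))) := by rw [L.r_u]; exact hh2'
      set A₁ := act h (L.u (L.s g₁)) with hA₁def
      set A₂ := act h (L.u (L.s g₂)) with hA₂def
      have sA₁ : L.s A₁ = L.s g₁ := by rw [hA₁def, aS _ _ hA₁, L.s_u]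
      have hg2B : act h g₂ = L.m A₁ g₂ := by
        rw [K1 h g₂ hh2, hA₁def, c]
      have hmm : H.s h = F.obj (L.r (L.m g₁ g₂)) := by rw [L.r_m _ _ c]; exact hh
      show L.m (act h (L.m g₁ g₂)) (L.i (act h (L.u (L.s (L.m g₁ g₂))))) = _
      rw [L.s_m _ _ c, aM h g₁ g₂ hh c]
      -- LHS = m (m (act h g₁) g₂) (i A₂); RHS = m (m (act h g₁) (i A₁)) (m (act h g₂) (i A₂))
      have rA₁eq : L.r (act h g₂) = L.r A₁ := by
        rw [hg2B, L.r_m _ _ (by rw [sA₁, c])]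
      have e1 : L.s (act h g₁) = L.r (L.i A₁) := by
        rw [L.r_i, sA₁, aS h g₁ hh]
      have e2 : L.s (L.i A₁) = L.r (L.m (act h g₂) (L.i A₂)) := by
        rw [L.s_i, L.r_m _ _ (by rw [L.r_i, aS h g₂ hh2,
          hA₂def, aS _ _ hA₂, L.s_u]), rA₁eq]
      rw [L.m_assoc _ _ _ e1 e2,
        ← L.m_assoc (L.i A₁) (act h g₂) (L.i A₂) (by rw [L.s_i, rA₁eq])
          (by rw [L.r_i, aS h g₂ hh2, hA₂def, aS _ _ hA₂, L.s_u]),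
        hg2B, ← L.m_assoc (L.i A₁) A₁ g₂ (by rw [L.s_i]) (by rw [sA₁, c]),
        L.i_m, sA₁, c, L.u_m,
        ← L.m_assoc (act h g₁) g₂ (L.i A₂) (by rw [aS h g₁ hh, c])
          (by rw [L.r_i, hA₂def, aS _ _ hA₂, L.s_u])]
    · -- the isomorphism Φ
      have memΨ : ∀ l : L.Arr, act (H.i (F.arr l)) l ∈ fibreArr F ∧
          H.s (F.arr l) = F.obj (L.r (act (H.i (F.arr l)) l)) := by
        intro l
        have hanch : H.s (H.i (F.arr l)) = F.obj (L.r l) := by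
          rw [H.s_i, F.r_arr]
        constructor
        · show F.arr _ = _
          rw [aF _ _ hanch, aS _ _ hanch, H.i_m, F.s_arr]
        · rw [aAnchor _ _ hanch, H.r_i]
      have FΦ : ∀ (h : H.Arr) (g : L.Arr), g ∈ fibreArr F →
          H.s h = F.obj (L.r g) → F.arr (act h g) = h := by
        intro h g hg hh
        have hg' : F.arr g = H.u (F.obj (L.s g)) := hg
        rw [aF h g hh, hg', ← hh.trans (fibEq g hg), H.m_u]
      have leftInv : ∀ p : {p : H.Arr × L.Arr //
          p.2 ∈ fibreArr F ∧ H.s p.1 = F.obj (L.r p.2)},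
          (⟨(F.arr (act p.1.1 p.1.2),
              act (H.i (F.arr (act p.1.1 p.1.2))) (act p.1.1 p.1.2)),
            memΨ _⟩ : {p : H.Arr × L.Arr //
              p.2 ∈ fibreArr F ∧ H.s p.1 = F.obj (L.r p.2)}) = p := by
        rintro ⟨⟨h, g⟩, hg, hh⟩
        have Fhg : F.arr (act h g) = h := FΦ h g hg hh
        refine Subtype.ext (Prod.ext ?_ ?_) <;> simp only [Fhg]
        rw [← aMul (H.i h) h g (by rw [H.s_i]) hh, H.i_m, hh, aUnit g]
      have rightInv : ∀ l : L.Arr,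
          act (F.arr l) (act (H.i (F.arr l)) l) = l := by
        intro l
        rw [← aMul (F.arr l) (H.i (F.arr l)) l (H.r_i _).symm
          (by rw [H.s_i, F.r_arr]), H.m_i, F.r_arr, aUnit l]
      refine ⟨fun p => act p.1.1 p.1.2, ?_, ?_, ?_, ?_, ?_, ?_⟩
      · -- IsHomeomorph
        have cΦ : Continuous (fun p : {p : H.Arr × L.Arr //
            p.2 ∈ fibreArr F ∧ H.s p.1 = F.obj (L.r p.2)} => act p.1.1 p.1.2) :=
          cA.comp (Continuous.subtype_mk continuous_subtype_val (fun p => p.2.2))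
        have cΨ : Continuous (fun l : L.Arr =>
            (⟨(F.arr l, act (H.i (F.arr l)) l), memΨ l⟩ :
              {p : H.Arr × L.Arr //
                p.2 ∈ fibreArr F ∧ H.s p.1 = F.obj (L.r p.2)})) := by
          refine Continuous.subtype_mk (F.cont_arr.prodMk
            (cA.comp (Continuous.subtype_mk
              ((H.cont_i.comp F.cont_arr).prodMk continuous_id)
              (fun l => by
                show H.s (H.i (F.arr l)) = F.obj (L.r l)
                rw [H.s_i, F.r_arr])))) _
        have E : {p : H.Arr × L.Arr //
            p.2 ∈ fibreArr F ∧ H.s p.1 = F.obj (L.r p.2)} ≃ₜ L.Arr :=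
          { toFun := fun p => act p.1.1 p.1.2
            invFun := fun l => ⟨(F.arr l, act (H.i (F.arr l)) l), memΨ l⟩
            left_inv := fun p => leftInv p
            right_inv := fun l => rightInv l
            continuous_toFun := cΦ
            continuous_invFun := cΨ }
        exact isHomeomorph_iff_exists_inverse.mpr
          ⟨cΦ, ⟨fun l => ⟨(F.arr l, act (H.i (F.arr l)) l), memΨ l⟩,
            fun p => leftInv p, fun l => rightInv l, cΨ⟩⟩
      · intro p
        exact aS _ _ p.2.2
      · intro p
        exact K2 _ _ p.2.2
      · intro x
        have h1 := aUnit (L.u x)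
        rwa [L.r_u] at h1
      · -- multiplicativity of Φ
        rintro ⟨⟨h₁, g₁⟩, m₁, a₁⟩ ⟨⟨h₂, g₂⟩, m₂, a₂⟩ _hc hmem
        dsimp only at _hc hmem ⊢
        have a₂' : H.s h₂ = F.obj (L.r (L.u (L.r g₂))) := by rw [L.r_u]; exact a₂
        set B := act h₂ (L.u (L.r g₂)) with hBdef
        have FrB : F.obj (L.r B) = H.r h₂ := aAnchor h₂ _ a₂'
        have hcF : F.obj (L.s g₁) = H.r h₂ := by rw [_hc]; exact FrB
        have aig : H.s (H.i h₂) = F.obj (L.r g₁) := by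
          rw [H.s_i, fibEq g₁ m₁, hcF]
        have sB : L.s B = L.r g₂ := by rw [hBdef, aS _ _ a₂', L.s_u]
        -- C' := act (i h₂) (u (r B)) ; show i C' = B
        have anchor_iB : H.s (H.i h₂) = F.obj (L.r B) := by rw [H.s_i, FrB]
        have sC' : L.s (act (H.i h₂) (L.u (L.r B))) = L.r B := by
          rw [aS _ _ (by rw [L.r_u]; exact anchor_iB), L.s_u]
        have hiBB : act (H.i h₂) B = L.u (L.r g₂) := by
          rw [hBdef, ← aMul (H.i h₂) h₂ (L.u (L.r g₂)) (by rw [H.s_i]) a₂',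
            H.i_m, a₂', aUnit]
        have hK : L.m (act (H.i h₂) (L.u (L.r B))) B = L.u (L.r g₂) := by
          rw [← K1 (H.i h₂) B anchor_iB, hiBB]
        have rC' : L.r (act (H.i h₂) (L.u (L.r B))) = L.r g₂ := by
          have := congrArg L.r hK
          rwa [L.r_m _ _ sC', L.r_u] at this
        have hBinv : B = L.i (act (H.i h₂) (L.u (L.r B))) :=
          L.inv_unique_s8 sC' (by rw [rC']; exact hK)
        have hiC : L.i (act (H.i h₂) (L.u (L.r B))) = B := hBinv.symm
        -- rewrite the goal
        rw [_hc]
        show act (H.m h₁ h₂)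
            (L.m (L.m (act (H.i h₂) g₁)
              (L.i (act (H.i h₂) (L.u (L.r B))))) g₂) = _
        rw [hiC]
        set b₁ := act (H.i h₂) g₁ with hb₁def
        have sb₁ : L.s b₁ = L.s g₁ := by rw [hb₁def, aS _ _ aig]
        have comp_b₁B : L.s b₁ = L.r B := by rw [sb₁, _hc]
        have Frb₁ : F.obj (L.r b₁) = H.s h₂ := by
          rw [hb₁def, aAnchor _ _ aig, H.r_i]
        have rX : L.r (L.m b₁ B) = L.r b₁ := L.r_m _ _ comp_b₁B
        have sX : L.s (L.m b₁ B) = L.r g₂ := by rw [L.s_m _ _ comp_b₁B, sB]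
        have h12 : H.s h₁ = H.r h₂ := by rw [a₁, fibEq g₁ m₁, hcF]
        have anchor2 : H.s h₂ = F.obj (L.r (L.m (L.m b₁ B) g₂)) := by
          rw [L.r_m _ _ sX, rX, Frb₁]
        rw [aMul h₁ h₂ _ h12 anchor2,
          aM h₂ (L.m b₁ B) g₂ (by rw [rX, Frb₁]) sX,
          aM h₂ b₁ B (by rw [Frb₁]) comp_b₁B,
          hb₁def, ← aMul h₂ (H.i h₂) g₁ (H.r_i h₂).symm aig, H.m_i,
          show H.r h₂ = F.obj (L.r g₁) by rw [fibEq g₁ m₁, hcF],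
          aUnit g₁,
          aM h₁ (L.m g₁ B) g₂ (by rw [L.r_m _ _ _hc]; exact a₁)
            (by rw [L.s_m _ _ _hc, sB]),
          aM h₁ g₁ B a₁ _hc,
          L.m_assoc _ _ _ (by rw [aS h₁ g₁ a₁, _hc]) sB,
          ← K1 h₂ g₂ a₂]
      · intro p
        exact FΦ _ _ p.2.1 p.2.2
end

section
/- Let F₁ : L₁ → H₁ and F₂ : L₂ → H₂ be groupoid fibrations with fibres G₁ and G₂ respectively, where H₁ = L₂. Let F := F₂ ∘ F₁ : L₁ → H₂. Then F is a groupoid fibration; if G denotes the fibre of F, then F₁ maps G into G₂ and the restriction F₁|_G : G → G₂ is a groupoid fibration whose fibre is G₁. Moreover, if F₁ is a groupoid covering then F₁|_G : G → G₂ is a groupoid covering, and if F₂ is a groupoid covering then G = G₁ (i.e., the arrow spaces G¹ and G₁¹ coincide as subspaces of L₁¹). -/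
/-- Composition of continuous functors. -/
def ContFunctor.comp {A B C : TopGroupoid} (F₂ : ContFunctor B C) (F₁ : ContFunctor A B) :
    ContFunctor A C where
  obj := F₂.obj ∘ F₁.obj
  arr := F₂.arr ∘ F₁.arr
  cont_obj := F₂.cont_obj.comp F₁.cont_obj
  cont_arr := F₂.cont_arr.comp F₁.cont_arr
  r_arr := fun l => (F₂.r_arr (F₁.arr l)).trans (congrArg F₂.obj (F₁.r_arr l))
  s_arr := fun l => (F₂.s_arr (F₁.arr l)).trans (congrArg F₂.obj (F₁.s_arr l))
  u_arr := fun x => (congrArg F₂.arr (F₁.u_arr x)).trans (F₂.u_arr (F₁.obj x))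
  i_arr := fun l => (congrArg F₂.arr (F₁.i_arr l)).trans (F₂.i_arr (F₁.arr l))
  m_arr := fun l₁ l₂ h =>
    (congrArg F₂.arr (F₁.m_arr l₁ l₂ h)).trans
      (F₂.m_arr (F₁.arr l₁) (F₁.arr l₂)
        ((F₁.s_arr l₁).trans ((congrArg F₁.obj h).trans (F₁.r_arr l₂).symm)))

section Aux

variable {L₁ L₂ H₂ : TopGroupoid} (F₁ : ContFunctor L₁ L₂) (F₂ : ContFunctor L₂ H₂)

lemma mem_fibre_comp_iff (g : L₁.Arr) :
    g ∈ fibreArr (F₂.comp F₁) ↔ F₁.arr g ∈ fibreArr F₂ := by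
  show F₂.arr (F₁.arr g) = H₂.u (F₂.obj (F₁.obj (L₁.s g))) ↔
    F₂.arr (F₁.arr g) = H₂.u (F₂.obj (L₂.s (F₁.arr g)))
  rw [F₁.s_arr]

lemma fibre_sub : fibreArr F₁ ⊆ fibreArr (F₂.comp F₁) := by
  intro g hg
  show F₂.arr (F₁.arr g) = H₂.u (F₂.obj (F₁.obj (L₁.s g)))
  rw [show F₁.arr g = L₂.u (F₁.obj (L₁.s g)) from hg, F₂.u_arr]

/-- The intermediate map `ψ : L₂¹ ×ₛ L₁⁰ → H₂¹ ×ₛ L₁⁰`. -/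
def psi : FibTarget F₁ → FibTarget (F₂.comp F₁) := fun p =>
  ⟨(F₂.arr p.1.1, p.1.2), (F₂.s_arr p.1.1).trans (congrArg F₂.obj p.2)⟩

lemma fibMap_comp : fibMap (F₂.comp F₁) = psi F₁ F₂ ∘ fibMap F₁ := rfl

lemma psi_surjective (h₂ : IsFibration F₂) : Function.Surjective (psi F₁ F₂) := by
  rintro ⟨⟨h, x⟩, hx⟩
  obtain ⟨k, hk⟩ := h₂.1 ⟨(h, F₁.obj x), hx⟩
  have h1 : F₂.arr k = h := congrArg (fun p => p.1.1) hk
  have h2 : L₂.s k = F₁.obj x := congrArg (fun p => p.1.2) hk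
  exact ⟨⟨(k, x), h2⟩, Subtype.ext (Prod.ext h1 rfl)⟩

/-- The comparison map `χ : H₂¹ ×ₛ L₁⁰ → H₂¹ ×ₛ L₂⁰`. -/
def chi : FibTarget (F₂.comp F₁) → FibTarget F₂ := fun p =>
  ⟨(p.1.1, F₁.obj p.1.2), p.2⟩

lemma chi_continuous : Continuous (chi F₁ F₂) := by
  apply Continuous.subtype_mk
  exact ((continuous_fst.comp continuous_subtype_val).prodMk
    (F₁.cont_obj.comp (continuous_snd.comp continuous_subtype_val)))

lemma psi_isOpenMap (h₂ : IsFibration F₂) : IsOpenMap (psi F₁ F₂) := by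
  intro U hU
  obtain ⟨V, hV, rfl⟩ := isOpen_induced_iff.mp hU
  rw [isOpen_iff_forall_mem_open]
  rintro p ⟨q, hqU, rfl⟩
  obtain ⟨A, B, hA, hB, hkA, hxB, hAB⟩ := isOpen_prod_iff.mp hV q.1.1 q.1.2 hqU
  refine ⟨chi F₁ F₂ ⁻¹' (fibMap F₂ '' A) ∩ {p | p.1.2 ∈ B}, ?_, ?_, ?_⟩
  · rintro p' ⟨⟨k, hkA', hk⟩, hpB⟩
    have h1 : F₂.arr k = p'.1.1 := congrArg (fun r => r.1.1) hk
    have h2 : L₂.s k = F₁.obj p'.1.2 := congrArg (fun r => r.1.2) hk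
    refine ⟨⟨(k, p'.1.2), h2⟩, hAB ⟨hkA', hpB⟩, Subtype.ext (Prod.ext h1 rfl)⟩
  · exact ((chi_continuous F₁ F₂).isOpen_preimage _ (h₂.2 A hA)).inter
      (isOpen_induced_iff.mpr ⟨_, (hB.preimage continuous_snd), rfl⟩)
  · constructor
    · exact ⟨q.1.1, hkA, Subtype.ext (Prod.ext rfl q.2)⟩
    · exact hxB

/-- The restriction `Φ : G¹ → G₂¹ ×ₛ L₁⁰`. -/
def Phi : {g : L₁.Arr // g ∈ fibreArr (F₂.comp F₁)} →
    {q : {k : L₂.Arr // k ∈ fibreArr F₂} × L₁.Obj // L₂.s q.1.1 = F₁.obj q.2} :=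
  fun g => ⟨(⟨F₁.arr g.1, (mem_fibre_comp_iff F₁ F₂ g.1).1 g.2⟩, L₁.s g.1), F₁.s_arr g.1⟩

/-- The forgetful map `Ξ : G₂¹ ×ₛ L₁⁰ → L₂¹ ×ₛ L₁⁰`. -/
def Xi : {q : {k : L₂.Arr // k ∈ fibreArr F₂} × L₁.Obj // L₂.s q.1.1 = F₁.obj q.2} →
    FibTarget F₁ := fun q => ⟨(q.1.1.1, q.1.2), q.2⟩

lemma Xi_continuous : Continuous (Xi F₁ F₂) := by
  apply Continuous.subtype_mk
  exact (continuous_subtype_val.comp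
    (continuous_fst.comp continuous_subtype_val)).prodMk
    (continuous_snd.comp continuous_subtype_val)

lemma Phi_continuous : Continuous (Phi F₁ F₂) := by
  apply Continuous.subtype_mk
  exact ((F₁.cont_arr.comp continuous_subtype_val).subtype_mk _).prodMk
    (L₁.cont_s.comp continuous_subtype_val)

lemma Phi_surjective (h₁ : IsFibration F₁) : Function.Surjective (Phi F₁ F₂) := by
  rintro ⟨⟨⟨k, hk⟩, x⟩, hq⟩
  obtain ⟨g, hg⟩ := h₁.1 ⟨(k, x), hq⟩
  have h1 : F₁.arr g = k := congrArg (fun p => p.1.1) hg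
  have h2 : L₁.s g = x := congrArg (fun p => p.1.2) hg
  refine ⟨⟨g, (mem_fibre_comp_iff F₁ F₂ g).2 (h1 ▸ hk)⟩, ?_⟩
  exact Subtype.ext (Prod.ext (Subtype.ext h1) h2)

lemma Phi_image (V : Set L₁.Arr) :
    Phi F₁ F₂ '' (Subtype.val ⁻¹' V) = Xi F₁ F₂ ⁻¹' (fibMap F₁ '' V) := by
  ext q
  constructor
  · rintro ⟨g, hgU, rfl⟩
    exact ⟨g.1, hgU, rfl⟩
  · rintro ⟨g, hgV, hg⟩
    have h1 : F₁.arr g = q.1.1.1 := congrArg (fun p => p.1.1) hg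
    have h2 : L₁.s g = q.1.2 := congrArg (fun p => p.1.2) hg
    exact ⟨⟨g, (mem_fibre_comp_iff F₁ F₂ g).2 (h1 ▸ q.1.1.2)⟩, hgV,
      Subtype.ext (Prod.ext (Subtype.ext h1) h2)⟩

lemma Phi_isOpenMap (h₁ : IsFibration F₁) : IsOpenMap (Phi F₁ F₂) := by
  intro U hU
  obtain ⟨V, hV, rfl⟩ := isOpen_induced_iff.mp hU
  rw [Phi_image F₁ F₂ V]
  exact (Xi_continuous F₁ F₂).isOpen_preimage _ (h₁.2 V hV)

lemma Phi_injective (hcov : IsCovering F₁) : Function.Injective (Phi F₁ F₂) := by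
  intro a b hab
  have h1 : F₁.arr a.1 = F₁.arr b.1 :=
    congrArg (fun p => p.1.1.1) hab
  have h2 : L₁.s a.1 = L₁.s b.1 := congrArg (fun p => p.1.2) hab
  exact Subtype.ext (hcov.bijective.injective
    (Subtype.ext (Prod.ext h1 h2) : fibMap F₁ a.1 = fibMap F₁ b.1))

end Aux

/-- the composite of two groupoid fibrations is a groupoid fibration;
the middle functor restricts to a fibration from the fibre `G` of the composite to
the fibre `G₂` of `F₂`, with fibre `G₁`; if `F₁` is a covering so is the restriction,
and if `F₂` is a covering then `G = G₁`. -/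
theorem compose_fibrations (L₁ L₂ H₂ : TopGroupoid)
    (F₁ : ContFunctor L₁ L₂) (F₂ : ContFunctor L₂ H₂)
    (h₁ : IsFibration F₁) (h₂ : IsFibration F₂) :
    IsFibration (F₂.comp F₁) ∧
    (∀ g ∈ fibreArr (F₂.comp F₁), F₁.arr g ∈ fibreArr F₂) ∧
    -- the restriction `F₁|_G : G → G₂` of `F₁` to the fibres is a groupoid fibration:
    (∃ Φ : {g : L₁.Arr // g ∈ fibreArr (F₂.comp F₁)} →
          {q : {k : L₂.Arr // k ∈ fibreArr F₂} × L₁.Obj // L₂.s q.1.1 = F₁.obj q.2},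
      (∀ g, ((Φ g).1.1 : L₂.Arr) = F₁.arr g.1 ∧ (Φ g).1.2 = L₁.s g.1) ∧
      Function.Surjective Φ ∧ IsOpenMap Φ ∧
      (IsCovering F₁ → IsHomeomorph Φ)) ∧
    -- the fibre of the restriction `F₁|_G` equals the fibre `G₁` of `F₁`:
    {g : L₁.Arr | g ∈ fibreArr (F₂.comp F₁) ∧ F₁.arr g = L₂.u (F₁.obj (L₁.s g))}
      = fibreArr F₁ ∧
    -- if `F₂` is a covering then `G = G₁`:
    (IsCovering F₂ → fibreArr (F₂.comp F₁) = fibreArr F₁) := by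
  refine ⟨⟨?_, ?_⟩, ?_, ?_, ?_, ?_⟩
  · -- surjectivity of the composite's fibMap
    rw [fibMap_comp]
    exact (psi_surjective F₁ F₂ h₂).comp h₁.1
  · -- openness of the composite's fibMap
    rw [fibMap_comp]
    exact (psi_isOpenMap F₁ F₂ h₂).comp h₁.2
  · exact fun g hg => (mem_fibre_comp_iff F₁ F₂ g).1 hg
  · refine ⟨Phi F₁ F₂, fun g => ⟨rfl, rfl⟩, Phi_surjective F₁ F₂ h₁,
      Phi_isOpenMap F₁ F₂ h₁, fun hcov => ?_⟩
    exact ⟨Phi_continuous F₁ F₂, Phi_isOpenMap F₁ F₂ h₁,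
      Phi_injective F₁ F₂ hcov, Phi_surjective F₁ F₂ h₁⟩
  · ext g
    exact ⟨fun h => h.2, fun h => ⟨fibre_sub F₁ F₂ h, h⟩⟩
  · intro hcov
    apply Set.Subset.antisymm _ (fibre_sub F₁ F₂)
    intro g hg
    have hg' : F₂.arr (F₁.arr g) = H₂.u (F₂.obj (F₁.obj (L₁.s g))) := hg
    show F₁.arr g = L₂.u (F₁.obj (L₁.s g))
    apply hcov.bijective.injective
    apply Subtype.ext
    apply Prod.ext
    · show F₂.arr (F₁.arr g) = F₂.arr (L₂.u (F₁.obj (L₁.s g)))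
      rw [hg', F₂.u_arr]
    · show L₂.s (F₁.arr g) = L₂.s (L₂.u (F₁.obj (L₁.s g)))
      rw [F₁.s_arr, L₂.s_u]
end

section
/- Let H be a topological groupoid, let H act on its arrow space H¹ by left translation (anchor map r : H¹ → H⁰, action h·l := m(h,l)), and let p : X → H¹ be a continuous open surjection. Then s∘p : X → H⁰ is a continuous open surjection, and the pull-back groupoid p*(H ⋉ H¹) is isomorphic as a topological groupoid to the Čech groupoid of s∘p: the map sending an arrow (x, (h,l), y) of p*(H ⋉ H¹) to (x,y) is a homeomorphism onto X ×_{s∘p, H⁰, s∘p} X and, together with the identity on the object space X, is an isomorphism of topological groupoids. -/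
/-- let `H` act on its arrow space `H¹` by left translation and let
`p : X → H¹` be a continuous open surjection.  Then `s ∘ p : X → H⁰` is a continuous
open surjection, and the pull-back groupoid `p*(H ⋉ H¹)` is isomorphic as a
topological groupoid to the Čech groupoid of `s ∘ p`: the map sending an arrow
`(x, (h, l), y)` to `(x, y)` is a homeomorphism onto `X ×_{s∘p,H⁰,s∘p} X` which,
together with the identity on `X`, intertwines the groupoid structures.
Here an arrow of `H ⋉ H¹` is a pair `(h, l)` with `s h = r l`, range `m(h,l)`
and source `l`, so the arrow space of `p*(H ⋉ H¹)` is
`{(x, (h,l), y) : s h = r l ∧ p x = m(h,l) ∧ p y = l}`. -/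
theorem pullback_of_translation_action_is_Cech (H : TopGroupoid) (X : Type)
    [TopologicalSpace X] (p : X → H.Arr)
    (hc : Continuous p) (ho : IsOpenMap p) (hs : Function.Surjective p) :
    -- `s ∘ p` is a continuous open surjection:
    Continuous (fun x : X => H.s (p x)) ∧
    IsOpenMap (fun x : X => H.s (p x)) ∧
    Function.Surjective (fun x : X => H.s (p x)) ∧
    -- the isomorphism with the Čech groupoid of `s ∘ p`:
    (∃ Ψ : {t : X × (H.Arr × H.Arr) × X //
          H.s t.2.1.1 = H.r t.2.1.2 ∧ p t.1 = H.m t.2.1.1 t.2.1.2 ∧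
            p t.2.2 = t.2.1.2} →
        {q : X × X // H.s (p q.1) = H.s (p q.2)},
      (∀ t, (Ψ t : X × X) = (t.1.1, t.1.2.2)) ∧
      IsHomeomorph Ψ ∧
      -- the pull-back groupoid is closed under its units, inverses and products,
      -- and `Ψ` (with the identity on objects `X`) intertwines them with those of
      -- the Čech groupoid:
      (∀ x : X,
        (H.s (H.u (H.r (p x))) = H.r (p x) ∧
          p x = H.m (H.u (H.r (p x))) (p x) ∧ p x = p x)) ∧
      (∀ t : X × (H.Arr × H.Arr) × X,
        H.s t.2.1.1 = H.r t.2.1.2 → p t.1 = H.m t.2.1.1 t.2.1.2 → p t.2.2 = t.2.1.2 →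
        (H.s (H.i t.2.1.1) = H.r (H.m t.2.1.1 t.2.1.2) ∧
          p t.2.2 = H.m (H.i t.2.1.1) (H.m t.2.1.1 t.2.1.2) ∧
          p t.1 = H.m t.2.1.1 t.2.1.2)) ∧
      (∀ t t' : X × (H.Arr × H.Arr) × X,
        H.s t.2.1.1 = H.r t.2.1.2 → p t.1 = H.m t.2.1.1 t.2.1.2 → p t.2.2 = t.2.1.2 →
        H.s t'.2.1.1 = H.r t'.2.1.2 → p t'.1 = H.m t'.2.1.1 t'.2.1.2 →
        p t'.2.2 = t'.2.1.2 → t.2.2 = t'.1 →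
        (H.s (H.m t.2.1.1 t'.2.1.1) = H.r t'.2.1.2 ∧
          p t.1 = H.m (H.m t.2.1.1 t'.2.1.1) t'.2.1.2 ∧
          p t'.2.2 = t'.2.1.2)) ∧
      (∀ (t t' : {t : X × (H.Arr × H.Arr) × X //
            H.s t.2.1.1 = H.r t.2.1.2 ∧ p t.1 = H.m t.2.1.1 t.2.1.2 ∧
              p t.2.2 = t.2.1.2})
          (_hcomp : t.1.2.2 = t'.1.1)
          (hmem : H.s (H.m t.1.2.1.1 t'.1.2.1.1) = H.r t'.1.2.1.2 ∧
            p t.1.1 = H.m (H.m t.1.2.1.1 t'.1.2.1.1) t'.1.2.1.2 ∧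
            p t'.1.2.2 = t'.1.2.1.2),
        (Ψ ⟨(t.1.1, (H.m t.1.2.1.1 t'.1.2.1.1, t'.1.2.1.2), t'.1.2.2), hmem⟩ :
          X × X) = (t.1.1, t'.1.2.2))) := by
  classical
  refine ⟨H.cont_s.comp hc, H.open_s.comp ho, ?_, ?_⟩
  · intro x0
    obtain ⟨x, hx⟩ := hs (H.u x0)
    exact ⟨x, by simp [hx, H.s_u]⟩
  · -- the two spaces
    set A := {t : X × (H.Arr × H.Arr) × X //
      H.s t.2.1.1 = H.r t.2.1.2 ∧ p t.1 = H.m t.2.1.1 t.2.1.2 ∧ p t.2.2 = t.2.1.2}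
      with hA
    set B := {q : X × X // H.s (p q.1) = H.s (p q.2)} with hB
    have toFun_prop : ∀ t : A, H.s (p t.1.1) = H.s (p t.1.2.2) := by
      rintro ⟨⟨x, ⟨h, l⟩, y⟩, h1, h2, h3⟩
      simp only at h1 h2 h3 ⊢
      rw [h2, H.s_m _ _ h1, h3]
    have invFun_prop : ∀ q : B,
        H.s (H.m (p q.1.1) (H.i (p q.1.2))) = H.r (p q.1.2) ∧
        p q.1.1 = H.m (H.m (p q.1.1) (H.i (p q.1.2))) (p q.1.2) ∧
        p q.1.2 = p q.1.2 := by
      rintro ⟨⟨x, y⟩, hq⟩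
      simp only at hq ⊢
      have hcomp : H.s (p x) = H.r (H.i (p y)) := by rw [H.r_i, hq]
      refine ⟨?_, ?_, trivial⟩
      · rw [H.s_m _ _ hcomp, H.s_i]
      · rw [H.m_assoc _ _ _ hcomp (H.s_i _), H.i_m, ← hq, H.m_u]
    let toF : A → B := fun t => ⟨(t.1.1, t.1.2.2), toFun_prop t⟩
    let invF : B → A := fun q =>
      ⟨(q.1.1, (H.m (p q.1.1) (H.i (p q.1.2)), p q.1.2), q.1.2), invFun_prop q⟩
    have left_inv : Function.LeftInverse invF toF := by
      rintro ⟨⟨x, ⟨h, l⟩, y⟩, h1, h2, h3⟩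
      simp only at h1 h2 h3
      apply Subtype.ext
      simp only [toF, invF]
      have hl : p y = l := h3
      have hh : H.m (p x) (H.i (p y)) = h := by
        rw [h2, hl]
        rw [H.m_assoc _ _ _ h1 (by rw [H.r_i] : H.s l = H.r (H.i l)), H.m_i,
          ← h1, H.m_u]
      rw [hh, hl]
    have right_inv : Function.RightInverse invF toF := by
      rintro ⟨⟨x, y⟩, hq⟩
      rfl
    have cont_to : Continuous toF := by
      apply Continuous.subtype_mk
      exact ((continuous_fst.comp continuous_subtype_val).prodMk
        ((continuous_snd.comp (continuous_snd.comp continuous_subtype_val))))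
    have cont_inv : Continuous invF := by
      have c1 : Continuous (fun q : B => p q.1.1) :=
        hc.comp (continuous_fst.comp continuous_subtype_val)
      have c2 : Continuous (fun q : B => p q.1.2) :=
        hc.comp (continuous_snd.comp continuous_subtype_val)
      have cpair : Continuous (fun q : B =>
          (⟨(p q.1.1, H.i (p q.1.2)), by
            rw [H.r_i]; exact q.2⟩ : {pr : H.Arr × H.Arr // H.s pr.1 = H.r pr.2})) :=
        Continuous.subtype_mk (c1.prodMk (H.cont_i.comp c2)) _
      have cm : Continuous (fun q : B => H.m (p q.1.1) (H.i (p q.1.2))) :=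
        H.cont_m.comp cpair
      apply Continuous.subtype_mk
      exact (continuous_fst.comp continuous_subtype_val).prodMk
        (((cm.prodMk c2)).prodMk (continuous_snd.comp continuous_subtype_val))
    let e : A ≃ₜ B :=
      { toFun := toF, invFun := invF, left_inv := left_inv, right_inv := right_inv,
        continuous_toFun := cont_to, continuous_invFun := cont_inv }
    refine ⟨e, fun t => rfl, e.isHomeomorph, ?_, ?_, ?_, fun t t' _ _ => rfl⟩
    · intro x
      exact ⟨H.s_u _, (H.u_m _).symm, rfl⟩
    · rintro ⟨x, ⟨h, l⟩, y⟩ h1 h2 h3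
      simp only at h1 h2 h3 ⊢
      refine ⟨by rw [H.s_i, H.r_m _ _ h1], ?_, h2⟩
      rw [← H.m_assoc _ _ _ (by rw [H.s_i]) h1, H.i_m, h1, H.u_m, h3]
    · rintro ⟨x, ⟨h, l⟩, y⟩ ⟨x', ⟨h', l'⟩, y'⟩ h1 h2 h3 h1' h2' h3' hcomp
      simp only at h1 h2 h3 h1' h2' h3' hcomp ⊢
      have hl : l = H.m h' l' := by rw [← h3, hcomp, h2']
      have hsh : H.s h = H.r h' := by rw [h1, hl, H.r_m _ _ h1']
      refine ⟨by rw [H.s_m _ _ hsh, h1'], ?_, h3'⟩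
      rw [h2, hl, ← H.m_assoc _ _ _ hsh h1']
end

section
/- Let F : L → H be a groupoid extension (assume L⁰ = H⁰ and F⁰ = id) with fibre G. Then: (i) s(g) = r(g) for every g ∈ G¹, so G is a subgroup bundle of L; (ii) G is normal in L: m(m(l,g), i(l)) ∈ G¹ for all l ∈ L¹, g ∈ G¹ with s(l) = r(g); (iii) the range map of L restricts to an open map G¹ → L⁰; (iv) F¹ induces a homeomorphism onto H¹ from the quotient space L¹/G of L¹ by the relation l₁ ∼ l₂ iff l₁ = m(g, l₂) for some g ∈ G¹ (with the quotient topology), compatibly with the groupoid structures. Conversely, if G ⊆ L is a wide subgroupoid with the subspace topology satisfying (i)–(iii), then the quotient L¹/G with the quotient topology carries a unique topological groupoid structure H with object space L⁰ making the quotient map a continuous functor, and this quotient functor is a groupoid extension with fibre G. -/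
/-!
Let `G` be the fibre of an extension `F`. As `F⁰` is a homeomorphism, the projection
`H¹ ×_{H⁰} L⁰ → H¹` is one too, so `F¹` is the open surjection `(F¹, s)` followed by a
homeomorphism: an open quotient map whose fibres are exactly the left `G`-cosets, whence
`L¹/G ≅ H¹`. Restricting `(F¹, s)` over the unit section gives openness of `r` on `G`.

Conversely, normality of the subgroup bundle `G` makes left cosets compatible with
multiplication and inversion, and openness of `r = s` on `G` makes the `G`-saturation of an
open set open, as the projection of an open subset of `L¹ ×_{L⁰} G`. Thus `L¹ → L¹/G` is an
open quotient map, hence so is `L¹ ×_{L⁰} L¹ → L¹/G ×_{L⁰} L¹/G`, and all structure maps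
descend continuously.
-/

open Function Set

section PullbackTopology

variable {X Y Z : Type*} [TopologicalSpace X] [TopologicalSpace Y] [TopologicalSpace Z]

theorem isOpenMap_pullback_fst {f : X → Y} {g : Z → Y} (hf : Continuous f) (hg : IsOpenMap g) :
    IsOpenMap (Pullback.fst : f.Pullback g → X) := by
  intro O hO
  obtain ⟨O', hO', rfl⟩ := isOpen_induced_iff.1 hO
  rw [isOpen_iff_forall_mem_open]
  rintro _ ⟨⟨⟨x, z⟩, hxz⟩, hmem, rfl⟩
  obtain ⟨V, W, hV, hW, hxV, hzW, hVW⟩ := isOpen_prod_iff.1 hO' x z hmem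
  refine ⟨V ∩ f ⁻¹' (g '' W), ?_, hV.inter ((hg W hW).preimage hf), hxV, z, hzW, hxz.symm⟩
  rintro x' ⟨hx'V, z', hz'W, hz'⟩
  exact ⟨⟨(x', z'), hz'.symm⟩, hVW ⟨hx'V, hz'W⟩, rfl⟩

theorem IsOpenMap.of_comp_injective {f : X → Y} {g : Y → Z} (hg : Continuous g)
    (hg_inj : Injective g) (h : IsOpenMap (g ∘ f)) : IsOpenMap f := fun U hU => by
  rw [← hg_inj.preimage_image (f '' U), ← image_comp]
  exact (h U hU).preimage hg

end PullbackTopology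

theorem IsOpenQuotientMap.pullbackMap {X Z X' Z' Y : Type*} [TopologicalSpace X]
    [TopologicalSpace Z] [TopologicalSpace X'] [TopologicalSpace Z']
    {p : X → X'} {q : Z → Z'} (hp : IsOpenQuotientMap p) (hq : IsOpenQuotientMap q)
    {f : X' → Y} {g : Z' → Y} :
    IsOpenQuotientMap
      (fun x : (f ∘ p).Pullback (g ∘ q) => (⟨(p x.1.1, q x.1.2), x.2⟩ : f.Pullback g)) := by
  refine ⟨?_, ((hp.continuous.prodMap hq.continuous).comp continuous_subtype_val).subtype_mk _,
     (hp.isOpenMap.prodMap hq.isOpenMap).restrictPreimage {ab | f ab.1 = g ab.2}⟩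
  rintro ⟨⟨a, c⟩, h⟩
  obtain ⟨x, rfl⟩ := hp.surjective a
  obtain ⟨z, rfl⟩ := hq.surjective c
  exact ⟨⟨(x, z), h⟩, rfl⟩

namespace TopGroupoid

variable (L : TopGroupoid) {a b : L.Arr}

theorem i_m_cancel_left (h : L.s a = L.r b) : L.m (L.i a) (L.m a b) = b := by
  rw [← L.m_assoc _ _ _ (L.s_i a) h, L.i_m, h, L.u_m]

theorem m_i_cancel_right (h : L.s a = L.r b) : L.m (L.m a b) (L.i b) = a := by
  rw [L.m_assoc _ _ _ h (L.r_i b).symm, L.m_i, ← h, L.m_u]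

theorem eq_i_of_m_eq_u (h : L.s a = L.r b) (hab : L.m a b = L.u (L.r a)) : b = L.i a :=
  calc b = L.m (L.i a) (L.m a b) := (L.i_m_cancel_left h).symm
    _ = L.m (L.i a) (L.u (L.s (L.i a))) := by rw [hab, L.s_i]
    _ = L.i a := L.m_u _

theorem i_i_s15 (g : L.Arr) : L.i (L.i g) = g :=
  (L.eq_i_of_m_eq_u (L.s_i g) (by rw [L.i_m, L.r_i])).symm

theorem i_m_cancel_right (h : L.s a = L.s b) : L.m (L.m a (L.i b)) b = a := by
  simpa only [L.i_i_s15] using L.m_i_cancel_right (a := a) (b := L.i b) (by rw [L.r_i, h])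

theorem i_m_rev (h : L.s a = L.r b) : L.i (L.m a b) = L.m (L.i b) (L.i a) := by
  refine (L.eq_i_of_m_eq_u ?_ ?_).symm
  · rw [L.s_m a b h, L.r_m _ _ (by rw [L.s_i, L.r_i, h]), L.r_i]
  · rw [← L.m_assoc _ _ _ (by rw [L.s_m a b h, L.r_i]) (by rw [L.s_i, L.r_i, h]),
      L.m_i_cancel_right h, L.m_i, L.r_m a b h]

def LeftRel (G : Set L.Arr) (l₁ l₂ : L.Arr) : Prop :=
  ∃ g ∈ G, l₁ = L.m g l₂ ∧ L.s g = L.r l₂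

structure IsWideSubgroupoid (G : Set L.Arr) : Prop where
  u_mem : ∀ x, L.u x ∈ G
  i_mem : ∀ g ∈ G, L.i g ∈ G
  m_mem : ∀ g₁ g₂, g₁ ∈ G → g₂ ∈ G → L.s g₁ = L.r g₂ → L.m g₁ g₂ ∈ G

structure IsNormalSubgroupBundle (G : Set L.Arr) : Prop extends L.IsWideSubgroupoid G where
  s_eq_r : ∀ g ∈ G, L.s g = L.r g
  conj_mem : ∀ l g, g ∈ G → L.s l = L.r g → L.m (L.m l g) (L.i l) ∈ G

variable {L} {G : Set L.Arr}

theorem LeftRel.s_eq (h : L.LeftRel G a b) : L.s a = L.s b := by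
  obtain ⟨g, -, rfl, hg⟩ := h
  exact L.s_m g b hg

namespace IsWideSubgroupoid

variable (hG : L.IsWideSubgroupoid G)
include hG

theorem leftRel_equivalence : Equivalence (L.LeftRel G) where
  refl l := ⟨L.u (L.r l), hG.u_mem _, (L.u_m l).symm, L.s_u _⟩
  symm := by
    rintro _ b ⟨g, hg, rfl, hgb⟩
    exact ⟨L.i g, hG.i_mem g hg, (L.i_m_cancel_left hgb).symm, by rw [L.s_i, L.r_m g b hgb]⟩
  trans := by
    rintro _ _ c ⟨g, hg, rfl, hgb⟩ ⟨k, hk, rfl, hkc⟩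
    have hgk : L.s g = L.r k := by rw [hgb, L.r_m k c hkc]
    exact ⟨L.m g k, hG.m_mem g k hg hk hgk, (L.m_assoc g k c hgk hkc).symm,
      by rw [L.s_m g k hgk, hkc]⟩

theorem quot_mk_eq_iff : Quot.mk (L.LeftRel G) a = Quot.mk _ b ↔ L.LeftRel G a b :=
  Quot.eq.trans hG.leftRel_equivalence.eqvGen_iff

theorem isOpenMap_quot_mk (hs : IsOpenMap fun g : G => L.s g) :
    IsOpenMap (Quot.mk (L.LeftRel G)) := by
  intro U hU
  let act : L.r.Pullback (fun g : G => L.s g) → L.Arr := fun p => L.m p.1.2 p.1.1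
  have hsat : Quot.mk (L.LeftRel G) ⁻¹' (Quot.mk _ '' U) = Pullback.fst '' (act ⁻¹' U) := by
    ext l
    constructor
    · rintro ⟨_, hU', heq⟩
      obtain ⟨g, hg, rfl, hgl⟩ := hG.quot_mk_eq_iff.1 heq
      exact ⟨⟨(l, ⟨g, hg⟩), hgl.symm⟩, hU', rfl⟩
    · rintro ⟨⟨⟨l, g⟩, hlg⟩, hmem, rfl⟩
      exact ⟨_, hmem, Quot.sound ⟨g, g.2, rfl, hlg.symm⟩⟩
  have hact : Continuous act := L.cont_m.comp <|
    ((continuous_subtype_val.comp (continuous_snd.comp continuous_subtype_val)).prodMk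
      (continuous_fst.comp continuous_subtype_val)).subtype_mk fun p => p.2.symm
  rw [← isQuotientMap_quot_mk.isOpen_preimage, hsat]
  exact isOpenMap_pullback_fst L.cont_r hs _ (hU.preimage hact)

end IsWideSubgroupoid

namespace IsNormalSubgroupBundle

variable (hG : L.IsNormalSubgroupBundle G)
include hG

theorem leftRel_r_eq (h : L.LeftRel G a b) : L.r a = L.r b := by
  obtain ⟨g, hg, rfl, hgb⟩ := h
  rw [L.r_m g b hgb, ← hG.s_eq_r g hg, hgb]

theorem exists_m_eq_m {l g : L.Arr} (hg : g ∈ G) (h : L.s l = L.r g) :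
    ∃ k ∈ G, L.s k = L.r l ∧ L.m l g = L.m k l := by
  have hc : L.s (L.m l g) = L.r (L.i l) := by rw [L.s_m l g h, L.r_i, hG.s_eq_r g hg, h]
  refine ⟨_, hG.conj_mem l g hg h, by rw [L.s_m _ _ hc, L.s_i], ?_⟩
  rw [L.i_m_cancel_right (by rw [hc, L.r_i])]

theorem leftRel_m {a' b' : L.Arr} (ha : L.LeftRel G a' a) (hb : L.LeftRel G b' b)
    (h : L.s a = L.r b) : L.LeftRel G (L.m a' b') (L.m a b) := by
  obtain ⟨g, hg, rfl, hga⟩ := ha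
  obtain ⟨k, hk, rfl, hkb⟩ := hb
  have hak : L.s a = L.r k := by rw [h, ← hkb, hG.s_eq_r k hk]
  obtain ⟨k', hk', hk'a, hconj⟩ := hG.exists_m_eq_m hk hak
  have hgk' : L.s g = L.r k' := by rw [hga, ← hk'a, hG.s_eq_r k' hk']
  have hk'ab : L.s k' = L.r (L.m a b) := by rw [L.r_m a b h, hk'a]
  refine ⟨L.m g k', hG.m_mem g k' hg hk' hgk', ?_, by rw [L.s_m g k' hgk', hk'ab]⟩
  calc L.m (L.m g a) (L.m k b)
      = L.m g (L.m (L.m a k) b) := by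
        rw [L.m_assoc g a _ hga (by rw [L.r_m k b hkb, hak]), L.m_assoc a k b hak hkb]
    _ = L.m (L.m g k') (L.m a b) := by
        rw [hconj, L.m_assoc k' a b hk'a h, L.m_assoc g k' _ hgk' hk'ab]

theorem leftRel_i (h : L.LeftRel G a b) : L.LeftRel G (L.i a) (L.i b) := by
  obtain ⟨g, hg, rfl, hgb⟩ := h
  obtain ⟨k, hk, hkb, hconj⟩ :=
    hG.exists_m_eq_m (l := L.i b) (hG.i_mem g hg) (by rw [L.s_i, L.r_i, hgb])
  exact ⟨k, hk, by rw [L.i_m_rev hgb, hconj], by rw [hkb, L.r_i]⟩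

theorem isOpenQuotientMap_quot_mk (hr : IsOpenMap fun g : G => L.r g) :
    IsOpenQuotientMap (Quot.mk (L.LeftRel G)) := by
  refine ⟨Quot.mk_surjective, continuous_quot_mk, hG.isOpenMap_quot_mk ?_⟩
  simpa only [hG.s_eq_r _ (Subtype.prop _)] using hr

theorem quot_mk_m_out (h : L.s a = L.r b) :
    Quot.mk (L.LeftRel G) (L.m (Quot.mk (L.LeftRel G) a).out (Quot.mk (L.LeftRel G) b).out) =
      Quot.mk _ (L.m a b) :=
  Quot.sound <| hG.leftRel_m (hG.quot_mk_eq_iff.1 (Quot.out_eq _))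
    (hG.quot_mk_eq_iff.1 (Quot.out_eq _)) h

end IsNormalSubgroupBundle

noncomputable def quotient (hG : L.IsNormalSubgroupBundle G) (hr : IsOpenMap fun g : G => L.r g) :
    TopGroupoid where
  Obj := L.Obj
  Arr := Quot (L.LeftRel G)
  r := Quot.lift L.r fun _ _ => hG.leftRel_r_eq
  s := Quot.lift L.s fun _ _ => LeftRel.s_eq
  u x := Quot.mk _ (L.u x)
  i := Quot.lift (fun l => Quot.mk _ (L.i l)) fun _ _ h => Quot.sound (hG.leftRel_i h)
  -- independent of the chosen representatives on composable pairs, by `quot_mk_m_out`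
  m x y := Quot.mk _ (L.m x.out y.out)
  cont_r := continuous_quot_lift _ L.cont_r
  cont_s := continuous_quot_lift _ L.cont_s
  open_r := .of_comp continuous_quot_mk Quot.mk_surjective L.open_r
  open_s := .of_comp continuous_quot_mk Quot.mk_surjective L.open_s
  cont_u := continuous_quot_mk.comp L.cont_u
  cont_i := continuous_quot_lift _ (continuous_quot_mk.comp L.cont_i)
  cont_m := by
    have hq := hG.isOpenQuotientMap_quot_mk hr
    refine (hq.pullbackMap hq).continuous_comp_iff.1 ?_
    exact (continuous_quot_mk.comp L.cont_m).congr fun p => (hG.quot_mk_m_out p.2).symm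
  r_u := L.r_u
  s_u := L.s_u
  r_m := by
    rintro ⟨a⟩ ⟨b⟩ (h : L.s a = L.r b)
    exact (hG.leftRel_r_eq (hG.quot_mk_eq_iff.1 (hG.quot_mk_m_out h))).trans (L.r_m a b h)
  s_m := by
    rintro ⟨a⟩ ⟨b⟩ (h : L.s a = L.r b)
    exact (hG.quot_mk_eq_iff.1 (hG.quot_mk_m_out h)).s_eq.trans (L.s_m a b h)
  m_assoc := by
    rintro ⟨a⟩ ⟨b⟩ ⟨c⟩ (hab : L.s a = L.r b) (hbc : L.s b = L.r c)
    simp only [hG.quot_mk_m_out hab, hG.quot_mk_m_out hbc,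
      hG.quot_mk_m_out (by rw [L.s_m a b hab, hbc] : L.s (L.m a b) = L.r c),
      hG.quot_mk_m_out (by rw [L.r_m b c hbc, hab] : L.s a = L.r (L.m b c)),
      L.m_assoc a b c hab hbc]
  u_m := by
    rintro ⟨a⟩
    simp only [hG.quot_mk_m_out (L.s_u _), L.u_m]
  m_u := by
    rintro ⟨a⟩
    simp only [hG.quot_mk_m_out (L.r_u _).symm, L.m_u]
  r_i := by rintro ⟨a⟩; exact L.r_i a
  s_i := by rintro ⟨a⟩; exact L.s_i a
  m_i := by
    rintro ⟨a⟩
    simp only [hG.quot_mk_m_out (L.r_i a).symm, L.m_i]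
  i_m := by
    rintro ⟨a⟩
    simp only [hG.quot_mk_m_out (L.s_i a), L.i_m]

end TopGroupoid

namespace ContFunctor

variable {L H : TopGroupoid} (F : ContFunctor L H)

theorem continuous_fibMap : Continuous (fibMap F) :=
  (F.cont_arr.prodMk L.cont_s).subtype_mk _

theorem isOpenQuotientMap_arr (hF : IsFibration F) (hsurj : Surjective F.obj)
    (hopen : IsOpenMap F.obj) : IsOpenQuotientMap F.arr := by
  have hfst : IsOpenQuotientMap (Pullback.fst : H.s.Pullback F.obj → H.Arr) := by
    refine ⟨fun h => ?_, continuous_fst.comp continuous_subtype_val,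
      isOpenMap_pullback_fst H.cont_s hopen⟩
    obtain ⟨x, hx⟩ := hsurj (H.s h)
    exact ⟨⟨(h, x), hx.symm⟩, rfl⟩
  exact hfst.comp ⟨hF.1, F.continuous_fibMap, hF.2⟩

theorem isFibration_of_isOpenQuotientMap (hF : IsOpenQuotientMap F.arr)
    (hinj : Injective F.obj) : IsFibration F := by
  have hfst_inj : Injective (Pullback.fst : H.s.Pullback F.obj → H.Arr) := by
    rintro ⟨⟨h, x⟩, hx⟩ ⟨⟨h', x'⟩, hx'⟩ (rfl : h = h')
    obtain rfl : x = x' := hinj (hx.symm.trans hx')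
    rfl
  refine ⟨?_, IsOpenMap.of_comp_injective (continuous_fst.comp continuous_subtype_val)
    hfst_inj hF.isOpenMap⟩
  rintro ⟨⟨h, x⟩, hx⟩
  obtain ⟨l, rfl⟩ := hF.surjective h
  exact ⟨l, Subtype.ext (Prod.ext rfl (hinj ((F.s_arr l).symm.trans hx)))⟩

variable {F} {g : L.Arr}

theorem s_eq_r_of_mem_fibreArr (hinj : Injective F.obj) (hg : g ∈ fibreArr F) : L.s g = L.r g :=
  hinj (by rw [← F.r_arr, hg, H.r_u])

theorem conj_mem_fibreArr (hinj : Injective F.obj) {l : L.Arr} (hg : g ∈ fibreArr F)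
    (h : L.s l = L.r g) : L.m (L.m l g) (L.i l) ∈ fibreArr F := by
  have hsg : L.s g = L.s l := by rw [s_eq_r_of_mem_fibreArr hinj hg, h]
  have hc : L.s (L.m l g) = L.r (L.i l) := by rw [L.s_m l g h, L.r_i, hsg]
  change F.arr _ = _
  rw [L.s_m _ _ hc, L.s_i, F.m_arr _ _ hc, F.m_arr l g h, F.i_arr, hg, hsg, ← F.s_arr, H.m_u,
    H.m_i, F.r_arr]

theorem arr_eq_of_leftRel {a b : L.Arr} (h : L.LeftRel (fibreArr F) a b) : F.arr a = F.arr b := by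
  obtain ⟨g, hg, rfl, hgb⟩ := h
  rw [F.m_arr g b hgb, hg, hgb, ← F.r_arr, H.u_m]

theorem leftRel_of_arr_eq (hinj : Injective F.obj) {a b : L.Arr} (h : F.arr a = F.arr b) :
    L.LeftRel (fibreArr F) a b := by
  have hab : L.s a = L.s b := hinj (by rw [← F.s_arr, ← F.s_arr, h])
  have hc : L.s a = L.r (L.i b) := by rw [hab, L.r_i]
  refine ⟨L.m a (L.i b), ?_, (L.i_m_cancel_right hab).symm, by rw [L.s_m _ _ hc, L.s_i]⟩
  change F.arr _ = _
  rw [L.s_m _ _ hc, L.s_i, F.m_arr _ _ hc, F.i_arr, h, H.m_i, F.r_arr]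

theorem isOpenMap_r_fibreArr (hF : IsOpenMap (fibMap F)) (hinj : Injective F.obj) :
    IsOpenMap fun g : fibreArr F => L.r g := by
  intro V hV
  obtain ⟨U, hU, rfl⟩ := isOpen_induced_iff.1 hV
  let unit : L.Obj → FibTarget F := fun x => ⟨(H.u (F.obj x), x), H.s_u _⟩
  have hunit : Continuous unit :=
    ((H.cont_u.comp F.cont_obj).prodMk continuous_id).subtype_mk _
  have himage :
      (fun g : fibreArr F => L.r g) '' (Subtype.val ⁻¹' U) = unit ⁻¹' (fibMap F '' U) := by
    ext x
    constructor
    · rintro ⟨⟨g, hg⟩, hgU, rfl⟩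
      refine ⟨g, hgU, Subtype.ext ?_⟩
      change (F.arr g, L.s g) = (H.u (F.obj (L.r g)), L.r g)
      rw [hg, s_eq_r_of_mem_fibreArr hinj hg]
    · rintro ⟨l, hlU, heq⟩
      obtain ⟨harr, rfl⟩ := Prod.ext_iff.1 (congrArg Subtype.val heq)
      have hl : l ∈ fibreArr F := harr
      exact ⟨⟨l, hl⟩, hlU, (s_eq_r_of_mem_fibreArr hinj hl).symm⟩
  rw [himage]
  exact (hF U hU).preimage hunit

theorem isHomeomorph_lift_arr (hF : IsFibration F) (hobj : IsHomeomorph F.obj) :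
    IsHomeomorph (Quot.lift F.arr fun _ _ => arr_eq_of_leftRel) := by
  have hlift : IsOpenQuotientMap (Quot.lift F.arr fun _ _ => arr_eq_of_leftRel) :=
    .of_comp continuous_quot_mk Quot.mk_surjective (continuous_quot_lift _ F.cont_arr)
      (F.isOpenQuotientMap_arr hF hobj.surjective hobj.isOpenMap)
  refine ⟨hlift.continuous, hlift.isOpenMap, ?_, hlift.surjective⟩
  rintro ⟨a⟩ ⟨b⟩ h
  exact Quot.sound (leftRel_of_arr_eq hobj.injective h)

end ContFunctor

namespace TopGroupoid

variable {L : TopGroupoid} {G : Set L.Arr} (hG : L.IsNormalSubgroupBundle G)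
  (hr : IsOpenMap fun g : G => L.r g)

noncomputable def quotientFunctor : ContFunctor L (L.quotient hG hr) where
  obj := id
  arr := Quot.mk _
  cont_obj := continuous_id
  cont_arr := continuous_quot_mk
  r_arr _ := rfl
  s_arr _ := rfl
  u_arr _ := rfl
  i_arr _ := rfl
  m_arr _ _ h := (hG.quot_mk_m_out h).symm

theorem isFibration_quotientFunctor : IsFibration (L.quotientFunctor hG hr) :=
  ContFunctor.isFibration_of_isOpenQuotientMap _ (hG.isOpenQuotientMap_quot_mk hr) injective_id

theorem fibreArr_quotientFunctor : fibreArr (L.quotientFunctor hG hr) = G := by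
  ext l
  change Quot.mk _ l = Quot.mk _ (L.u (L.s l)) ↔ l ∈ G
  refine hG.quot_mk_eq_iff.trans ⟨?_, fun hl => ⟨l, hl, (L.m_u l).symm, (L.r_u _).symm⟩⟩
  rintro ⟨g, hg, hl, hgs⟩
  rw [L.r_u] at hgs
  rwa [hl, ← hgs, L.m_u]

theorem quotient_m_unique
    (m' : (L.quotient hG hr).s.Pullback (L.quotient hG hr).r → (L.quotient hG hr).Arr)
    (hm' : ∀ a b (h : L.s a = L.r b),
      m' ⟨(Quot.mk _ a, Quot.mk _ b), h⟩ = Quot.mk _ (L.m a b)) :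
    m' = fun p => (L.quotient hG hr).m p.1.1 p.1.2 := by
  funext p
  rcases p with ⟨⟨⟨a⟩, ⟨b⟩⟩, h⟩
  exact (hm' a b h).trans (hG.quot_mk_m_out h).symm

end TopGroupoid

/-- a groupoid extension (a fibration that is a homeomorphism on
objects) has as fibre a normal subgroup bundle on which the range map is open, and
`F¹` induces a homeomorphism `L¹/G ≅ H¹` compatible with the groupoid structures;
conversely any wide subgroupoid satisfying (i)–(iii) arises this way: the quotient
`L¹/G` carries a unique descended topological groupoid structure making the quotient
map a continuous functor, and the quotient functor is a groupoid extension with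
fibre `G`. -/
theorem groupoid_extensions_are_normal_subgroup_bundles
    (L H : TopGroupoid) (F : ContFunctor L H)
    (hfib : IsFibration F) (hobj : IsHomeomorph F.obj) :
    -- (i) the fibre is a subgroup bundle:
    ((∀ g ∈ fibreArr F, L.s g = L.r g) ∧
    -- (ii) it is normal in `L`:
    (∀ l g, g ∈ fibreArr F → L.s l = L.r g → L.m (L.m l g) (L.i l) ∈ fibreArr F) ∧
    -- (iii) the range map restricts to an open map on it:
    IsOpenMap (fun g : fibreArr F => L.r g.1) ∧
    -- (iv) `F¹` induces a homeomorphism `L¹/G ≅ H¹` compatible with the structures: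
    (∃ φ : Quot (fun l₁ l₂ : L.Arr =>
          ∃ g ∈ fibreArr F, l₁ = L.m g l₂ ∧ L.s g = L.r l₂) → H.Arr,
      (∀ l, φ (Quot.mk _ l) = F.arr l) ∧
      IsHomeomorph φ ∧
      (∀ l, H.r (φ (Quot.mk _ l)) = F.obj (L.r l) ∧
        H.s (φ (Quot.mk _ l)) = F.obj (L.s l)) ∧
      (∀ l₁ l₂, L.s l₁ = L.r l₂ →
        φ (Quot.mk _ (L.m l₁ l₂)) = H.m (φ (Quot.mk _ l₁)) (φ (Quot.mk _ l₂))))) ∧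
    -- Conversely:
    (∀ Gset : Set L.Arr,
      -- a wide subgroupoid ...
      (∀ x, L.u x ∈ Gset) →
      (∀ g ∈ Gset, L.i g ∈ Gset) →
      (∀ g₁ g₂, g₁ ∈ Gset → g₂ ∈ Gset → L.s g₁ = L.r g₂ → L.m g₁ g₂ ∈ Gset) →
      -- ... satisfying (i)-(iii):
      (∀ g ∈ Gset, L.s g = L.r g) →
      (∀ l g, g ∈ Gset → L.s l = L.r g → L.m (L.m l g) (L.i l) ∈ Gset) →
      IsOpenMap (fun g : Gset => L.r g.1) →
      -- ... yields a descended topological groupoid structure on `L¹/G`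
      -- making the quotient map a continuous functor:
      ∃ rQ : {f : Quot (fun l₁ l₂ : L.Arr =>
            ∃ g ∈ Gset, l₁ = L.m g l₂ ∧ L.s g = L.r l₂) → L.Obj //
          ∀ l, f (Quot.mk _ l) = L.r l},
      ∃ sQ : {f : Quot (fun l₁ l₂ : L.Arr =>
            ∃ g ∈ Gset, l₁ = L.m g l₂ ∧ L.s g = L.r l₂) → L.Obj //
          ∀ l, f (Quot.mk _ l) = L.s l},
      ∃ uQ : L.Obj → Quot (fun l₁ l₂ : L.Arr =>
            ∃ g ∈ Gset, l₁ = L.m g l₂ ∧ L.s g = L.r l₂),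
      ∃ iQ : Quot (fun l₁ l₂ : L.Arr =>
            ∃ g ∈ Gset, l₁ = L.m g l₂ ∧ L.s g = L.r l₂) →
          Quot (fun l₁ l₂ : L.Arr => ∃ g ∈ Gset, l₁ = L.m g l₂ ∧ L.s g = L.r l₂),
      ∃ mQ : {ab : Quot (fun l₁ l₂ : L.Arr =>
              ∃ g ∈ Gset, l₁ = L.m g l₂ ∧ L.s g = L.r l₂) ×
            Quot (fun l₁ l₂ : L.Arr =>
              ∃ g ∈ Gset, l₁ = L.m g l₂ ∧ L.s g = L.r l₂) //
            sQ.1 ab.1 = rQ.1 ab.2} →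
          Quot (fun l₁ l₂ : L.Arr => ∃ g ∈ Gset, l₁ = L.m g l₂ ∧ L.s g = L.r l₂),
        (∀ x, uQ x = Quot.mk _ (L.u x)) ∧
        (∀ l, iQ (Quot.mk _ l) = Quot.mk _ (L.i l)) ∧
        (∀ l₁ l₂ (_h : L.s l₁ = L.r l₂)
            (hc : sQ.1 (Quot.mk _ l₁) = rQ.1 (Quot.mk _ l₂)),
          mQ ⟨(Quot.mk _ l₁, Quot.mk _ l₂), hc⟩ = Quot.mk _ (L.m l₁ l₂)) ∧
        Continuous rQ.1 ∧ IsOpenMap rQ.1 ∧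
        Continuous sQ.1 ∧ IsOpenMap sQ.1 ∧
        Continuous uQ ∧ Continuous iQ ∧ Continuous mQ ∧
        (∀ x, rQ.1 (uQ x) = x ∧ sQ.1 (uQ x) = x) ∧
        -- the quotient functor (identity on objects) is a groupoid fibration,
        -- hence a groupoid extension:
        Function.Surjective (fun l : L.Arr =>
          (⟨(Quot.mk _ l, L.s l), sQ.2 l⟩ :
            {q : Quot (fun l₁ l₂ : L.Arr =>
                ∃ g ∈ Gset, l₁ = L.m g l₂ ∧ L.s g = L.r l₂) × L.Obj //
              sQ.1 q.1 = q.2})) ∧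
        IsOpenMap (fun l : L.Arr =>
          (⟨(Quot.mk _ l, L.s l), sQ.2 l⟩ :
            {q : Quot (fun l₁ l₂ : L.Arr =>
                ∃ g ∈ Gset, l₁ = L.m g l₂ ∧ L.s g = L.r l₂) × L.Obj //
              sQ.1 q.1 = q.2})) ∧
        -- the fibre of the quotient functor is `Gset`:
        {l : L.Arr | Quot.mk (fun l₁ l₂ : L.Arr =>
            ∃ g ∈ Gset, l₁ = L.m g l₂ ∧ L.s g = L.r l₂) l =
          Quot.mk _ (L.u (L.s l))} = Gset ∧
        -- uniqueness of the descended multiplication: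
        (∀ mQ' : {ab : Quot (fun l₁ l₂ : L.Arr =>
                ∃ g ∈ Gset, l₁ = L.m g l₂ ∧ L.s g = L.r l₂) ×
              Quot (fun l₁ l₂ : L.Arr =>
                ∃ g ∈ Gset, l₁ = L.m g l₂ ∧ L.s g = L.r l₂) //
              sQ.1 ab.1 = rQ.1 ab.2} →
            Quot (fun l₁ l₂ : L.Arr => ∃ g ∈ Gset, l₁ = L.m g l₂ ∧ L.s g = L.r l₂),
          (∀ l₁ l₂ (_h : L.s l₁ = L.r l₂)
              (hc : sQ.1 (Quot.mk _ l₁) = rQ.1 (Quot.mk _ l₂)),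
            mQ' ⟨(Quot.mk _ l₁, Quot.mk _ l₂), hc⟩ = Quot.mk _ (L.m l₁ l₂)) →
          mQ' = mQ)) := by
  refine ⟨⟨fun g hg => ContFunctor.s_eq_r_of_mem_fibreArr hobj.injective hg,
    fun l g hg h => ContFunctor.conj_mem_fibreArr hobj.injective hg h,
    ContFunctor.isOpenMap_r_fibreArr hfib.2 hobj.injective,
    Quot.lift F.arr fun _ _ => ContFunctor.arr_eq_of_leftRel, fun _ => rfl,
    F.isHomeomorph_lift_arr hfib hobj, fun l => ⟨F.r_arr l, F.s_arr l⟩, F.m_arr⟩, ?_⟩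
  intro G hGu hGi hGm hGsr hGn hr
  have hG : L.IsNormalSubgroupBundle G := ⟨⟨hGu, hGi, hGm⟩, hGsr, hGn⟩
  let Q := L.quotient hG hr
  refine ⟨⟨Q.r, fun _ => rfl⟩, ⟨Q.s, fun _ => rfl⟩, Q.u, Q.i, fun p => Q.m p.1.1 p.1.2,
    fun _ => rfl, fun _ => rfl, fun a b h _ => ((L.quotientFunctor hG hr).m_arr a b h).symm,
    Q.cont_r, Q.open_r, Q.cont_s, Q.open_s, Q.cont_u, Q.cont_i, Q.cont_m,
    fun x => ⟨Q.r_u x, Q.s_u x⟩, (L.isFibration_quotientFunctor hG hr).1,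
    (L.isFibration_quotientFunctor hG hr).2, L.fibreArr_quotientFunctor hG hr,
    fun m' hm' => L.quotient_m_unique hG hr m' fun a b h => hm' a b h h⟩
end
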